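/- arXiv:math/0503238 — 5 statements merged into one kernel-verified Lean document; each statement's English description precedes it below -/
import Mathlib

section
/- The map γ ↦ x_γ := Π_{i=1}^n x_{σ(i)}^{f_i(γ)} from Γ(r,p,n) to monomials in C[x_1,...,x_n] is injective, and the total degree of x_γ equals fmaj(γ). -/
/-!
A descent at position `i` makes `d_i(γ) = d_{i+1}(γ) + 1`, and colors lie in `[0, r)`, so
`f_1(γ) ≥ ⋯ ≥ f_n(γ)`, with `f_i = f_{i+1}` only if `γ_i, γ_{i+1}` have the same color and
`σ(i) < σ(i+1)`. Hence `σ` is read off the exponent vector of `x_γ` by listing the variables by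
decreasing exponent, ties broken by increasing index, and then `c_i = f_i mod r`. The degree is
`Σ f_i = r Σ d_i + Σ c_i`, and `Σ d_i = maj` since a descent at `j` is counted by `d_1, …, d_j`.
-/

open Finset

namespace ColoredPerm

/-- An element of the wreath product `G(r,n) = ℤ_r ≀ S_n`: a color vector and a permutation. -/
abbrev CPerm (r n : ℕ) := (Fin n → Fin r) × Equiv.Perm (Fin n)

variable {r n : ℕ}

/-- Descent at the (0-indexed) position `j`, i.e. the paper's descent at position `j+1`:
`γ_{j+1} ≻ γ_{j+2}` in the order where higher colors are smaller, ties by the values. -/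
def isDesc (g : CPerm r n) (j : ℕ) : Prop :=
  ∃ h : j + 1 < n,
    (g.1 ⟨j, Nat.lt_of_succ_lt h⟩ < g.1 ⟨j + 1, h⟩) ∨
      (g.1 ⟨j, Nat.lt_of_succ_lt h⟩ = g.1 ⟨j + 1, h⟩ ∧
        g.2 ⟨j + 1, h⟩ < g.2 ⟨j, Nat.lt_of_succ_lt h⟩)

instance (g : CPerm r n) (j : ℕ) : Decidable (isDesc g j) := by
  unfold isDesc; exact exists_prop_decidable _

/-- The descent set (0-indexed positions). -/
def Des (g : CPerm r n) : Finset ℕ := (Finset.range n).filter (isDesc g)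

def des (g : CPerm r n) : ℕ := (Des g).card

/-- The major index: sum of the (1-indexed) descent positions. -/
def maj (g : CPerm r n) : ℕ := ∑ j ∈ Des g, (j + 1)

/-- The color weight. -/
def col (g : CPerm r n) : ℕ := ∑ i, (g.1 i : ℕ)

/-- The flag major index. -/
def fmaj (g : CPerm r n) : ℕ := r * maj g + col g

/-- `dstat g i` is the paper's `d_i(g)`: the number of (1-indexed) descents `≥ i`. -/
def dstat (g : CPerm r n) (i : ℕ) : ℕ := ((Des g).filter fun j => i ≤ j + 1).card

/-- `fstat g i` is the paper's `f_{i+1}(g) = r·d_{i+1}(g) + c_{i+1}(g)` (0-indexed `i`). -/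
def fstat (g : CPerm r n) (i : Fin n) : ℕ := r * dstat g ((i : ℕ) + 1) + (g.1 i : ℕ)

/-- The flag descent number `fdes = r·des + c_1`. -/
def fdes (g : CPerm r n) (hn : 0 < n) : ℕ := r * des g + (g.1 ⟨0, hn⟩ : ℕ)

/-- `Γ(r,p,n)`: colored permutations whose last color is `< d = r/p`. -/
def Gamma (r p n : ℕ) (hn : 0 < n) : Finset (CPerm r n) :=
  Finset.univ.filter fun g => (g.1 ⟨n - 1, Nat.sub_lt hn one_pos⟩ : ℕ) < r / p

/-- `G(r,p,n)` as the set of colored permutations with color weight `≡ 0 (mod p)`. -/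
def Hfin (r p n : ℕ) : Finset (CPerm r n) :=
  Finset.univ.filter fun g => (∑ i, (g.1 i : ℕ)) % p = 0

end ColoredPerm

namespace ColoredPerm

/-- The colored-descent basis monomial `x_γ = Π_i x_{σ(i)}^{f_i(γ)}`. -/
noncomputable def xmon {r n : ℕ} (γ : CPerm r n) : MvPolynomial (Fin n) ℂ :=
  ∏ i : Fin n, MvPolynomial.X (γ.2 i) ^ fstat γ i

end ColoredPerm

namespace Finset

theorem card_filter_le_eq_card_filter_succ_le_add (S : Finset ℕ) (i : ℕ) :
    #(S.filter (i ≤ ·)) = #(S.filter (i + 1 ≤ ·)) + if i ∈ S then 1 else 0 := by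
  have hsplit : S.filter (i ≤ ·) = S.filter (i + 1 ≤ ·) ∪ S.filter (· = i) := by
    rw [← filter_or]; exact filter_congr fun _ _ => by omega
  rw [hsplit, card_union_of_disjoint (disjoint_filter.2 fun _ _ h₁ h₂ => by omega),
    filter_eq', apply_ite card, card_singleton, card_empty]

theorem sum_range_card_filter_le {S : Finset ℕ} {n : ℕ} (hS : S ⊆ range n) :
    ∑ i ∈ range n, #(S.filter (i ≤ ·)) = ∑ j ∈ S, (j + 1) := by
  simp_rw [card_filter]
  rw [sum_comm]
  refine sum_congr rfl fun j hj => ?_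
  rw [← card_filter, ← card_range (j + 1)]
  congr 1
  ext i
  have := mem_range.1 (hS hj)
  simp only [mem_filter, mem_range]
  omega

end Finset

namespace ColoredPerm

open OrderDual (toDual)

variable {r n : ℕ}

theorem mem_Des {γ : CPerm r n} {j : ℕ} : j ∈ Des γ ↔ isDesc γ j :=
  ⟨fun h => (mem_filter.1 h).2,
    fun h => mem_filter.2 ⟨mem_range.2 (Nat.lt_of_succ_lt h.1), h⟩⟩

theorem dstat_succ (γ : CPerm r n) (i : ℕ) : dstat γ (i + 1) = #((Des γ).filter (i ≤ ·)) :=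
  congrArg card (filter_congr fun _ _ => Nat.add_le_add_iff_right)

theorem dstat_succ_eq_dstat_add (γ : CPerm r n) (i : ℕ) :
    dstat γ (i + 1) = dstat γ (i + 1 + 1) + if isDesc γ i then 1 else 0 := by
  simp only [dstat_succ, ← mem_Des]
  exact card_filter_le_eq_card_filter_succ_le_add _ _

theorem sum_dstat (γ : CPerm r n) : ∑ i : Fin n, dstat γ ((i : ℕ) + 1) = maj γ := by
  simp only [dstat_succ]
  rw [Fin.sum_univ_eq_sum_range (fun i => #((Des γ).filter (i ≤ ·)))]
  exact sum_range_card_filter_le (filter_subset _ _)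

theorem sum_fstat (γ : CPerm r n) : ∑ i, fstat γ i = fmaj γ := by
  simp only [fstat, fmaj, col, sum_add_distrib, ← mul_sum, sum_dstat]

theorem val_color_eq_fstat_mod (γ : CPerm r n) (i : Fin n) : (γ.1 i : ℕ) = fstat γ i % r := by
  rw [fstat, Nat.mul_add_mod, Nat.mod_eq_of_lt (γ.1 i).2]

theorem toLex_fstat_lt_toLex_fstat_succ (γ : CPerm r n) (i : ℕ) (h : i + 1 < n) :
    toLex (toDual (fstat γ ⟨i, Nat.lt_of_succ_lt h⟩), γ.2 ⟨i, Nat.lt_of_succ_lt h⟩) <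
      toLex (toDual (fstat γ ⟨i + 1, h⟩), γ.2 ⟨i + 1, h⟩) := by
  set a : Fin n := ⟨i, Nat.lt_of_succ_lt h⟩
  set b : Fin n := ⟨i + 1, h⟩
  have hcb : (γ.1 b : ℕ) < r := (γ.1 b).2
  rw [Prod.Lex.toLex_lt_toLex', OrderDual.toDual_le_toDual, OrderDual.toDual_inj]
  have hdstat : dstat γ (a + 1) = dstat γ (b + 1) + if isDesc γ i then 1 else 0 :=
    dstat_succ_eq_dstat_add γ i
  rw [fstat, fstat, hdstat]
  split_ifs with hd
  · rw [mul_add]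
    exact ⟨by omega, fun heq => by omega⟩
  · have hnd : ¬(γ.1 a < γ.1 b ∨ γ.1 a = γ.1 b ∧ γ.2 b < γ.2 a) := fun hc => hd ⟨h, hc⟩
    rw [not_or, not_lt, not_and, not_lt] at hnd
    obtain ⟨hcol, hperm⟩ := hnd
    refine ⟨by simpa using hcol, fun heq => ?_⟩
    have hab : γ.2 a ≠ γ.2 b := fun e => by simpa [a, b] using γ.2.injective e
    exact (hperm (Fin.ext (by simpa using heq))).lt_of_ne hab

noncomputable def exponent (γ : CPerm r n) : Fin n →₀ ℕ :=
  ∑ i, Finsupp.single (γ.2 i) (fstat γ i)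

theorem exponent_apply_perm (γ : CPerm r n) (i : Fin n) : exponent γ (γ.2 i) = fstat γ i := by
  simp [exponent, Finsupp.finsetSum_apply, Finsupp.single_apply, γ.2.injective.eq_iff]

theorem degree_exponent (γ : CPerm r n) : (exponent γ).degree = fmaj γ := by
  simp only [exponent, map_sum, Finsupp.degree_single, sum_fstat]

theorem xmon_eq_monomial_exponent (γ : CPerm r n) :
    xmon γ = MvPolynomial.monomial (exponent γ) 1 := by
  simp only [xmon, exponent, MvPolynomial.X_pow_eq_monomial, MvPolynomial.monomial_sum_one]

def sortKey {ι : Type*} (e : ι → ℕ) (j : ι) : ℕᵒᵈ ×ₗ ι := toLex (toDual (e j), j)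

theorem sortKey_injective {ι : Type*} (e : ι → ℕ) : Function.Injective (sortKey e) :=
  fun _ _ h => congrArg Prod.snd (toLex.injective h)

theorem strictMono_sortKey_exponent_comp (γ : CPerm r n) :
    StrictMono (sortKey (exponent γ) ∘ γ.2) := by
  cases n with
  | zero => exact fun i => i.elim0
  | succ m =>
    refine Fin.strictMono_iff_lt_succ.2 fun i => ?_
    simp only [Function.comp_apply, sortKey, exponent_apply_perm]
    exact toLex_fstat_lt_toLex_fstat_succ γ i (by omega)

theorem perm_eq_of_exponent_eq {γ δ : CPerm r n} (h : exponent γ = exponent δ) :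
    γ.2 = δ.2 := by
  have hsorted := Tuple.unique_monotone (strictMono_sortKey_exponent_comp γ).monotone
    (h ▸ strictMono_sortKey_exponent_comp δ).monotone
  exact Equiv.ext fun i => sortKey_injective _ (congrFun hsorted i)

theorem exponent_injective : Function.Injective (exponent (r := r) (n := n)) := by
  intro γ δ h
  have hσ := perm_eq_of_exponent_eq h
  have hf : ∀ i, fstat γ i = fstat δ i := fun i => by
    rw [← exponent_apply_perm, h, hσ, exponent_apply_perm]
  refine Prod.ext (funext fun i => Fin.ext ?_) hσ
  rw [val_color_eq_fstat_mod, hf, ← val_color_eq_fstat_mod]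

theorem xmon_injective : Function.Injective (xmon (r := r) (n := n)) := by
  rw [funext xmon_eq_monomial_exponent]
  exact (MvPolynomial.monomial_left_injective one_ne_zero).comp exponent_injective

theorem totalDegree_xmon (γ : CPerm r n) : (xmon γ).totalDegree = fmaj γ := by
  rw [xmon_eq_monomial_exponent, MvPolynomial.totalDegree_monomial _ one_ne_zero]
  exact degree_exponent γ

end ColoredPerm

open ColoredPerm in
theorem xmon_injOn_and_degree_general (r p n : ℕ) (hn : 0 < n) :
    Set.InjOn (xmon (r := r) (n := n)) ↑(Gamma r p n hn) ∧
      ∀ γ ∈ Gamma r p n hn, (xmon γ).totalDegree = fmaj γ :=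
  ⟨xmon_injective.injOn, fun γ _ => totalDegree_xmon γ⟩

open ColoredPerm in
/-- The map `γ ↦ x_γ` is injective on `Γ(r,p,n)` and the total degree of
`x_γ` equals `fmaj(γ)`. -/
theorem xmon_injOn_and_degree (r p n : ℕ) (hr : 0 < r) (hp : 0 < p) (hn : 0 < n)
    (hpr : p ∣ r) :
    Set.InjOn (xmon (r := r) (n := n)) ↑(Gamma r p n hn) ∧
      ∀ γ ∈ Gamma r p n hn, (xmon γ).totalDegree = fmaj γ :=
  xmon_injOn_and_degree_general r p n hn
end

section
/- Let T = (T^0,...,T^{r-1}) be a standard Young r-tableau of total size n with n ∉ T^{r-1}, and let T↺ = (T^{r-1},T^0,...,T^{r-2}) be its 1-shift. Then f_i(T↺) = f_i(T) + 1 for all i = 1,...,n. -/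
/-!
Read `f_i = r·d_i + c_i` as a two-digit number in base `r`. The shift raises the low digit
`c_i` by one, except that `r - 1` wraps to `0`; this carry is absorbed by `d_i`. Indeed, moving
the last component to the front creates a descent at `j` when `j ∈ T^{r-1} ∌ j+1` and destroys
one when `j ∉ T^{r-1} ∋ j+1`, so the change in the descent count from `i` on telescopes to
`[i ∈ T^{r-1}] - [n ∈ T^{r-1}] = [i ∈ T^{r-1}]`.
-/

namespace Tableaux

/-- Descent of a placement `pos : Fin n → Fin r × ℕ × ℕ` (entry `j+1` ↦ (component, row,
column)) at the (0-indexed) position `j`: entry `j+2` lies strictly below entry `j+1`,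
i.e. in a later component, or in the same component and a lower row. -/
def isDescT {n r : ℕ} (pos : Fin n → Fin r × ℕ × ℕ) (j : ℕ) : Prop :=
  ∃ h : j + 1 < n,
    (pos ⟨j, Nat.lt_of_succ_lt h⟩).1 < (pos ⟨j + 1, h⟩).1 ∨
      ((pos ⟨j, Nat.lt_of_succ_lt h⟩).1 = (pos ⟨j + 1, h⟩).1 ∧
        (pos ⟨j, Nat.lt_of_succ_lt h⟩).2.1 < (pos ⟨j + 1, h⟩).2.1)

instance {n r : ℕ} (pos : Fin n → Fin r × ℕ × ℕ) (j : ℕ) : Decidable (isDescT pos j) := by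
  unfold isDescT; exact exists_prop_decidable _

/-- The descent set (0-indexed positions). -/
def DesT {n r : ℕ} (pos : Fin n → Fin r × ℕ × ℕ) : Finset ℕ :=
  (Finset.range n).filter (isDescT pos)

/-- `dT pos i` : the number of (1-indexed) descents `≥ i`. -/
def dT {n r : ℕ} (pos : Fin n → Fin r × ℕ × ℕ) (i : ℕ) : ℕ :=
  ((DesT pos).filter fun j => i ≤ j + 1).card

/-- `fT pos i` is the paper's `f_{i+1}(T) = r·d_{i+1}(T) + c_{i+1}(T)` (0-indexed `i`),
where `c` is the index of the component containing the entry. -/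
def fT {n r : ℕ} (pos : Fin n → Fin r × ℕ × ℕ) (i : Fin n) : ℕ :=
  r * dT pos ((i : ℕ) + 1) + ((pos i).1 : ℕ)

/-- A standard Young `r`-tableau of shape `Λ = (Λ^0,…,Λ^{r-1})` with entries `1,…,n`:
`pos` records the (component, row, column) of each entry; the filling is a bijection onto
the cells and is increasing along rows and down columns of each component. -/
structure SYTr (n r : ℕ) (Λ : Fin r → YoungDiagram) where
  pos : Fin n → Fin r × ℕ × ℕ
  mem_cells : ∀ i, ((pos i).2.1, (pos i).2.2) ∈ Λ (pos i).1
  inj : Function.Injective pos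
  surj : ∀ (k : Fin r) (c : ℕ × ℕ), c ∈ Λ k → ∃ i, pos i = (k, c.1, c.2)
  row_inc : ∀ i j : Fin n, (pos i).1 = (pos j).1 → (pos i).2.1 = (pos j).2.1 →
    (pos i).2.2 < (pos j).2.2 → i < j
  col_inc : ∀ i j : Fin n, (pos i).1 = (pos j).1 → (pos i).2.2 = (pos j).2.2 →
    (pos i).2.1 < (pos j).2.1 → i < j

end Tableaux

theorem Finset.sum_Ico_add_telescope {M : Type*} [AddCommMonoid M] {x y w : ℕ → M} {i n : ℕ}
    (hin : i ≤ n) (h : ∀ j, i ≤ j → j < n → x j + w (j + 1) = y j + w j) :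
    ∑ j ∈ Finset.Ico i n, x j + w n = ∑ j ∈ Finset.Ico i n, y j + w i := by
  induction n, hin using Nat.le_induction with
  | base => simp
  | succ n hin ih =>
    rw [Finset.sum_Ico_succ_top hin, Finset.sum_Ico_succ_top hin, add_assoc,
      h n hin n.lt_succ_self, ← add_assoc, add_right_comm _ (y n),
      ih fun j hij hjn => h j hij (hjn.trans n.lt_succ_self), add_right_comm]

theorem Fin.val_add_one_add_mul_indicator {m : ℕ} (c : Fin (m + 1)) :
    ((c + 1 : Fin (m + 1)) : ℕ) + (m + 1) * (if c = Fin.last m then 1 else 0) = c + 1 := by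
  rw [Fin.val_add_one]
  split_ifs with hc <;> simp [hc]

/-- Adding `1` preserves the lexicographic comparison unless one of `c`, `c'` wraps around. -/
theorem Fin.lex_lt_add_one_indicator {m : ℕ} (c c' : Fin (m + 1)) (p : Prop) [Decidable p] :
    (if c + 1 < c' + 1 ∨ (c + 1 = c' + 1 ∧ p) then 1 else 0) +
        (if c' = Fin.last m then 1 else 0) =
      (if c < c' ∨ (c = c' ∧ p) then 1 else 0) + (if c = Fin.last m then 1 else 0) := by
  simp only [Fin.lt_def, ← Fin.val_inj, Fin.val_add_one, Fin.val_last]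
  have := c.isLt
  have := c'.isLt
  by_cases hp : p <;> split_ifs <;> simp_all <;> omega

namespace Tableaux

theorem dT_succ_eq_sum_Ico {n r : ℕ} (pos : Fin n → Fin r × ℕ × ℕ) (i : ℕ) :
    dT pos (i + 1) = ∑ j ∈ Finset.Ico i n, if isDescT pos j then 1 else 0 := by
  rw [dT, DesT, Finset.filter_filter, ← Finset.card_filter]
  congr 1
  ext j
  simp only [Finset.mem_filter, Finset.mem_range, Finset.mem_Ico]
  grind

section Shift

variable {n m : ℕ} (pos : Fin n → Fin (m + 1) × ℕ × ℕ)

/-- The 1-shift `T ↦ T↺`. -/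
def shift : Fin n → Fin (m + 1) × ℕ × ℕ :=
  fun j => ((pos j).1 + 1, (pos j).2)

/-- Positions `j ≥ n` count as not in the last component. -/
def lastIndicator (j : ℕ) : ℕ :=
  if h : j < n then if (pos ⟨j, h⟩).1 = Fin.last m then 1 else 0 else 0

variable {pos}

theorem ite_isDescT_shift_add_lastIndicator (hlast : lastIndicator pos (n - 1) = 0) {j : ℕ}
    (hj : j < n) :
    (if isDescT (shift pos) j then 1 else 0) + lastIndicator pos (j + 1) =
      (if isDescT pos j then 1 else 0) + lastIndicator pos j := by
  by_cases hj1 : j + 1 < n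
  · simp only [isDescT, hj1, exists_true_left, lastIndicator, dif_pos hj]
    exact Fin.lex_lt_add_one_indicator _ _ _
  · have not_desc (p : Fin n → Fin (m + 1) × ℕ × ℕ) : ¬ isDescT p j :=
      fun ⟨h, _⟩ => hj1 h
    rw [if_neg (not_desc _), if_neg (not_desc _), lastIndicator, dif_neg hj1,
      show j = n - 1 by omega, hlast]

theorem dT_shift (hlast : lastIndicator pos (n - 1) = 0) {i : ℕ} (hi : i ≤ n) :
    dT (shift pos) (i + 1) = dT pos (i + 1) + lastIndicator pos i := by
  have := Finset.sum_Ico_add_telescope (w := lastIndicator pos) hi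
    fun j _ hj => ite_isDescT_shift_add_lastIndicator hlast hj
  rwa [lastIndicator, dif_neg (lt_irrefl n), add_zero, ← dT_succ_eq_sum_Ico,
    ← dT_succ_eq_sum_Ico] at this

theorem fT_shift (hlast : lastIndicator pos (n - 1) = 0) (i : Fin n) :
    fT (shift pos) i = fT pos i + 1 := by
  have hw : lastIndicator pos i = if (pos i).1 = Fin.last m then 1 else 0 := dif_pos i.isLt
  rw [fT, fT, dT_shift hlast i.isLt.le, hw, add_assoc,
    ← Fin.val_add_one_add_mul_indicator (pos i).1, shift]
  ring

end Shift

end Tableaux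

open Tableaux in
theorem shift_fstat_general (n r : ℕ) [NeZero r] (Λ : Fin r → YoungDiagram)
    (hn : 0 < n) (T : SYTr n r Λ)
    (hlast : ((T.pos ⟨n - 1, Nat.sub_lt hn one_pos⟩).1 : ℕ) ≠ r - 1) :
    ∀ i : Fin n,
      fT (fun j => ((T.pos j).1 + 1, (T.pos j).2)) i = fT T.pos i + 1 := by
  obtain ⟨m, rfl⟩ := Nat.exists_eq_succ_of_ne_zero (NeZero.ne r)
  have hlast' : lastIndicator T.pos (n - 1) = 0 := by
    rw [lastIndicator, dif_pos (Nat.sub_lt hn one_pos),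
      if_neg (by simpa [Fin.ext_iff] using hlast)]
  exact fT_shift hlast'

open Tableaux in
/-- If `T` is a standard Young `r`-tableau of total size `n` with
`n ∉ T^{r-1}`, and `T↺` is its 1-shift (every component index increases by 1 mod `r`,
cells unchanged), then `f_i(T↺) = f_i(T) + 1` for all `i`. -/
theorem shift_fstat (n r : ℕ) [NeZero r] (Λ : Fin r → YoungDiagram)
    (hcard : ∑ k : Fin r, (Λ k).card = n) (hn : 0 < n) (T : SYTr n r Λ)
    (hlast : ((T.pos ⟨n - 1, Nat.sub_lt hn one_pos⟩).1 : ℕ) ≠ r - 1) :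
    ∀ i : Fin n,
      fT (fun j => ((T.pos j).1 + 1, (T.pos j).2)) i = fT T.pos i + 1 :=
  shift_fstat_general n r Λ hn T hlast
end

section
/- For any λ⃗ ∈ P_{r,n}, the map φ_λ⃗ sending a reverse semi-standard Young r-tableau T to the pair (T, Δ) — where T is the standardization and Δ_i = (θ_i − f_i(T) − θ_{i+1} + f_{i+1}(T))/r with θ_{n+1} = 1 — is a bijection from RSSYT(λ⃗) onto SYT(λ⃗) × N^n, and moreover θ_i − 1 = f_i(T) + Σ_{j ≥ i} r·Δ_j for all i ∈ [n]. -/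
namespace Tableaux

/-- A reverse semi-standard Young `r`-tableau of shape `Λ`: an `r`-tuple of reverse
semi-standard fillings (entries weakly decreasing along rows, strictly decreasing down
columns) in which every entry of the `k`-th component is `≡ k+1 (mod r)`. -/
structure RSSYTr (n r : ℕ) (Λ : Fin r → YoungDiagram) where
  entry : Fin r → ℕ → ℕ → ℕ
  pos_entry : ∀ k i j, (i, j) ∈ Λ k → 0 < entry k i j
  zero_entry : ∀ k i j, (i, j) ∉ Λ k → entry k i j = 0
  row_weak : ∀ k i j1 j2, j1 ≤ j2 → (i, j2) ∈ Λ k → entry k i j2 ≤ entry k i j1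
  col_strict : ∀ k i1 i2 j, i1 < i2 → (i2, j) ∈ Λ k → entry k i2 j < entry k i1 j
  congr_mod : ∀ k i j, (i, j) ∈ Λ k → entry k i j % r = ((k : ℕ) + 1) % r

/-- All the entries of a reverse semi-standard `r`-tableau, in weakly decreasing order. -/
noncomputable def entriesList {n r : ℕ} (Λ : Fin r → YoungDiagram) (T : RSSYTr n r Λ) :
    List ℕ :=
  (Multiset.sort
    (∑ k : Fin r, ((Λ k).cells.val.map fun c => T.entry k c.1 c.2)) (· ≤ ·)).reverse

/-- The entries partition `θ(T) = (θ_1 ≥ θ_2 ≥ ⋯ ≥ θ_n)`. -/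
noncomputable def thetaP {n r : ℕ} (Λ : Fin r → YoungDiagram) (T : RSSYTr n r Λ)
    (i : ℕ) : ℕ :=
  (entriesList Λ T).getD i 0

end Tableaux

/-!
The inverse of `φ` is explicit: from a standard `r`-tableau `S` and `Δ ∈ ℕⁿ`, write
`θ_i = 1 + f_i(S) + r·Σ_{j ≥ i} Δ_j` into the cell of `i`. Since `f_i - f_{i+1}` is
`c_i - c_{i+1} ≥ 0` off the descents of `S` and `r + c_i - c_{i+1} > 0` at them, `θ` is weakly
decreasing, and strictly decreasing from a cell to any cell in a lower row or a later component.
Together with `θ_i ≡ c_i + 1 (mod r)` this makes a reverse semi-standard `r`-tableau whose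
standardization is `S`. Conversely, along the standardization of a reverse semi-standard tableau,
`θ_i - f_i - 1` is a weakly decreasing sequence of multiples of `r` that vanishes at `i = n + 1`,
and `Δ` is read off from its successive differences.
-/

lemma Fin.eq_of_val_add_one_modEq {r : ℕ} {k k' : Fin r} (h : (k : ℕ) + 1 ≡ k' + 1 [MOD r]) :
    k = k' :=
  Fin.ext (by simpa [Nat.ModEq, Nat.mod_eq_of_lt k.2, Nat.mod_eq_of_lt k'.2] using
    Nat.ModEq.add_right_cancel' 1 h)

namespace Tableaux

open Finset

variable {n r : ℕ} {Λ : Fin r → YoungDiagram}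

def allCells (r : ℕ) (Λ : Fin r → YoungDiagram) : Finset (Fin r × ℕ × ℕ) :=
  (univ.sigma fun k => (Λ k).cells).map (Equiv.sigmaEquivProd _ _).toEmbedding

lemma mem_allCells {p : Fin r × ℕ × ℕ} : p ∈ allCells r Λ ↔ (p.2.1, p.2.2) ∈ Λ p.1 := by
  simp [allCells]

lemma card_allCells : #(allCells r Λ) = ∑ k, (Λ k).card := by
  simp [allCells, YoungDiagram.card]

lemma SYTr.pos_injective : Function.Injective (SYTr.pos : SYTr n r Λ → _) := by
  rintro ⟨⟩ ⟨⟩ h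
  subst h
  rfl

lemma SYTr.map_univ_pos (S : SYTr n r Λ) : univ.map ⟨S.pos, S.inj⟩ = allCells r Λ := by
  ext p
  simp only [mem_map, mem_univ, true_and, Function.Embedding.coeFn_mk, mem_allCells]
  refine ⟨?_, fun hp => S.surj p.1 (p.2.1, p.2.2) hp⟩
  rintro ⟨m, rfl⟩
  exact S.mem_cells m

lemma SYTr.range_pos (S : SYTr n r Λ) : Set.range S.pos = allCells r Λ := by
  rw [← S.map_univ_pos, coe_map, coe_univ, Set.image_univ]
  rfl

lemma SYTr.le_of_pos_le (S : SYTr n r Λ) {i j : Fin n} (hk : (S.pos i).1 = (S.pos j).1)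
    (hrow : (S.pos i).2.1 ≤ (S.pos j).2.1) (hcol : (S.pos i).2.2 ≤ (S.pos j).2.2) : i ≤ j := by
  obtain ⟨l, hl⟩ := S.surj (S.pos j).1 ((S.pos i).2.1, (S.pos j).2.2)
    ((Λ _).up_left_mem hrow le_rfl (S.mem_cells j))
  have hil : i ≤ l := by
    rcases hcol.lt_or_eq with hcol | hcol
    · exact (S.row_inc i l (by rw [hl, hk]) (by rw [hl]) (by rw [hl]; exact hcol)).le
    · exact (S.inj (by rw [hl, ← hk, ← hcol])).le
  have hlj : l ≤ j := by
    rcases hrow.lt_or_eq with hrow | hrow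
    · exact (S.col_inc l j (by rw [hl]) (by rw [hl]) (by rw [hl]; exact hrow)).le
    · exact (S.inj (by rw [hl, hrow])).le
  exact hil.trans hlj

def RSSYTr.entryAt (T : RSSYTr n r Λ) (p : Fin r × ℕ × ℕ) : ℕ := T.entry p.1 p.2.1 p.2.2

lemma RSSYTr.entry_injective : Function.Injective (RSSYTr.entry : RSSYTr n r Λ → _) := by
  rintro ⟨⟩ ⟨⟩ h
  subst h
  rfl

lemma RSSYTr.eq_of_entryAt_pos_eq {T T' : RSSYTr n r Λ} (S : SYTr n r Λ)
    (h : ∀ m, T.entryAt (S.pos m) = T'.entryAt (S.pos m)) : T = T' := by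
  apply RSSYTr.entry_injective
  funext k a b
  by_cases hmem : (a, b) ∈ Λ k
  · obtain ⟨m, hm⟩ := S.surj k (a, b) hmem
    simpa [RSSYTr.entryAt, hm] using h m
  · rw [T.zero_entry k a b hmem, T'.zero_entry k a b hmem]

lemma RSSYTr.entryAt_modEq (T : RSSYTr n r Λ) {p : Fin r × ℕ × ℕ} (hp : p ∈ allCells r Λ) :
    T.entryAt p ≡ p.1 + 1 [MOD r] :=
  T.congr_mod _ _ _ (mem_allCells.mp hp)

lemma RSSYTr.comp_add_one_le_entryAt (T : RSSYTr n r Λ) {p : Fin r × ℕ × ℕ}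
    (hp : p ∈ allCells r Λ) : (p.1 : ℕ) + 1 ≤ T.entryAt p :=
  (T.entryAt_modEq hp).symm.le_of_lt_add (by
    have := T.pos_entry _ _ _ (mem_allCells.mp hp)
    have := p.1.2
    simp only [RSSYTr.entryAt] at *
    omega)

lemma RSSYTr.entryAt_lt_of_lt_of_le (T : RSSYTr n r Λ) {p q : Fin r × ℕ × ℕ}
    (hq : q ∈ allCells r Λ) (hk : p.1 = q.1) (hrow : p.2.1 < q.2.1) (hcol : p.2.2 ≤ q.2.2) :
    T.entryAt q < T.entryAt p := by
  have hq := mem_allCells.mp hq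
  simp only [RSSYTr.entryAt, hk]
  exact (T.col_strict _ _ _ _ hrow hq).trans_le
    (T.row_weak _ _ _ _ hcol ((Λ q.1).up_left_mem hrow.le le_rfl hq))

lemma sum_map_cells_eq_map_allCells (T : RSSYTr n r Λ) :
    ∑ k, ((Λ k).cells.val.map fun c => T.entry k c.1 c.2) =
      (allCells r Λ).val.map T.entryAt := by
  simp only [allCells, map_val, Finset.sigma, Multiset.sigma, Multiset.map_bind,
    Multiset.map_map]
  rfl

def level (p : Fin r × ℕ × ℕ) : Fin r ×ₗ ℕ := toLex (p.1, p.2.1)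

lemma isDescT_iff {pos : Fin n → Fin r × ℕ × ℕ} {a b : Fin n} (hb : (b : ℕ) = a + 1) :
    isDescT pos a ↔ level (pos a) < level (pos b) := by
  obtain ⟨b, hbn⟩ := b
  subst hb
  simp [isDescT, level, Prod.Lex.toLex_lt_toLex, hbn]

lemma exists_isDescT_of_level_lt (pos : Fin n → Fin r × ℕ × ℕ) {a b : Fin n} (hab : a ≤ b)
    (hlt : level (pos a) < level (pos b)) :
    ∃ j : ℕ, (a : ℕ) ≤ j ∧ j + 1 ≤ b ∧ isDescT pos j := by
  obtain ⟨k, hk⟩ := Nat.exists_eq_add_of_le (Fin.le_def.mp hab)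
  induction k generalizing b with
  | zero =>
    obtain rfl : b = a := Fin.ext hk
    exact absurd hlt (lt_irrefl _)
  | succ k ih =>
    have hb' : (a : ℕ) + k < n := by omega
    by_cases h : level (pos a) < level (pos ⟨a + k, hb'⟩)
    · obtain ⟨j, hja, hjb, hj⟩ := ih (Fin.le_def.mpr (Nat.le_add_right _ _)) h rfl
      have hjb : j + 1 ≤ (a : ℕ) + k := hjb
      exact ⟨j, hja, by omega, hj⟩
    · refine ⟨a + k, by omega, by omega, ?_⟩
      exact (isDescT_iff (a := ⟨a + k, hb'⟩) (by simp only; omega)).mpr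
        ((not_lt.mp h).trans_lt hlt)

lemma dT_antitone (pos : Fin n → Fin r × ℕ × ℕ) : Antitone (dT pos) :=
  fun _ _ h => card_le_card fun _ => by simpa only [mem_filter] using And.imp_right h.trans

lemma dT_self (pos : Fin n → Fin r × ℕ × ℕ) : dT pos n = 0 := by
  simp only [dT, card_eq_zero, filter_eq_empty_iff, DesT, mem_filter, mem_range]
  rintro j ⟨-, h, -⟩
  omega

lemma dT_succ (pos : Fin n → Fin r × ℕ × ℕ) (i : ℕ) :
    dT pos (i + 1) = dT pos (i + 2) + if isDescT pos i then 1 else 0 := by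
  have hsplit : (DesT pos).filter (fun j => i + 1 ≤ j + 1) =
      (DesT pos).filter (fun j => i + 2 ≤ j + 1) ∪ (DesT pos).filter (fun j => j = i) := by
    rw [← filter_or]
    exact filter_congr fun j _ => by omega
  have hi : i ∈ DesT pos ↔ isDescT pos i := by
    simp only [DesT, mem_filter, mem_range, and_iff_right_iff_imp]
    exact fun ⟨h, _⟩ => by omega
  rw [dT, dT, hsplit, card_union_of_disjoint (disjoint_filter.mpr fun j _ h => by omega),
    filter_eq', apply_ite card, card_singleton, card_empty]
  simp only [hi]

lemma fT_add_of_succ (pos : Fin n → Fin r × ℕ × ℕ) {a b : Fin n} (hb : (b : ℕ) = a + 1) :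
    fT pos a + (pos b).1 = fT pos b + (pos a).1 + if isDescT pos a then r else 0 := by
  rw [fT, fT, hb, dT_succ pos a]
  split_ifs <;> ring

lemma fT_modEq (pos : Fin n → Fin r × ℕ × ℕ) (m : Fin n) : fT pos m ≡ (pos m).1 [MOD r] := by
  rw [fT, add_comm]
  exact Nat.add_mul_mod_self_left _ _ _

lemma fT_of_succ_eq (pos : Fin n → Fin r × ℕ × ℕ) {m : Fin n} (hm : (m : ℕ) + 1 = n) :
    fT pos m = (pos m).1 := by
  rw [fT, hm, dT_self, mul_zero, zero_add]

def tailSum (Δ : Fin n → ℕ) (i : ℕ) : ℕ :=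
  ∑ j ∈ univ.filter (fun j : Fin n => i ≤ (j : ℕ)), Δ j

lemma tailSum_of_le (Δ : Fin n → ℕ) {i : ℕ} (h : n ≤ i) : tailSum Δ i = 0 :=
  sum_eq_zero fun j hj => absurd (mem_filter.mp hj).2 (by omega)

lemma tailSum_of_lt (Δ : Fin n → ℕ) {i : ℕ} (h : i < n) :
    tailSum Δ i = Δ ⟨i, h⟩ + tailSum Δ (i + 1) := by
  rw [tailSum, tailSum, ← sum_insert (by simp)]
  congr 1
  ext j
  simp only [mem_filter, mem_univ, true_and, mem_insert, Fin.ext_iff]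
  omega

lemma tailSum_antitone (Δ : Fin n → ℕ) : Antitone (tailSum Δ) :=
  fun _ _ h => sum_le_sum_of_subset fun _ => by
    simpa only [mem_filter] using And.imp_right h.trans

lemma tailSum_injective : Function.Injective (tailSum : (Fin n → ℕ) → ℕ → ℕ) := by
  intro Δ Δ' h
  funext j
  have := congrFun h j
  rw [tailSum_of_lt Δ j.2, tailSum_of_lt Δ' j.2, congrFun h (j + 1)] at this
  simpa using this

lemma exists_eq_mul_tailSum (a : ℕ → ℤ) (hdvd : ∀ i, (r : ℤ) ∣ a i)
    (hstep : ∀ i < n, a (i + 1) ≤ a i) (hn : a n = 0) :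
    ∃ Δ : Fin n → ℕ, ∀ i ≤ n, a i = r * tailSum Δ i := by
  set Δ : Fin n → ℕ := fun j => ((a j - a (j + 1)) / r).toNat
  refine ⟨Δ, fun i hi => ?_⟩
  obtain ⟨k, hk⟩ := Nat.exists_eq_add_of_le hi
  induction k generalizing i with
  | zero =>
    obtain rfl : i = n := by omega
    simp [tailSum_of_le _ le_rfl, hn]
  | succ k ih =>
    have hin : i < n := by omega
    have hΔ : (r : ℤ) * Δ ⟨i, hin⟩ = a i - a (i + 1) :=
      (congrArg _ (Int.toNat_of_nonneg (Int.ediv_nonneg (by linarith [hstep i hin])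
        (by positivity)))).trans (Int.mul_ediv_cancel' (dvd_sub (hdvd i) (hdvd (i + 1))))
    have := ih (i + 1) (by omega) (by omega)
    rw [tailSum_of_lt _ hin]
    push_cast
    linarith

def theta (pos : Fin n → Fin r × ℕ × ℕ) (Δ : Fin n → ℕ) (m : Fin n) : ℕ :=
  1 + fT pos m + r * tailSum Δ m

lemma theta_modEq (pos : Fin n → Fin r × ℕ × ℕ) (Δ : Fin n → ℕ) (m : Fin n) :
    theta pos Δ m ≡ (pos m).1 + 1 [MOD r] := by
  have : theta pos Δ m = (pos m).1 + 1 + r * (dT pos (m + 1) + tailSum Δ m) := by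
    rw [theta, fT]
    ring
  rw [this]
  exact Nat.add_mul_mod_self_left _ _ _

lemma theta_lt_of_isDescT (pos : Fin n → Fin r × ℕ × ℕ) (Δ : Fin n → ℕ) {a b : Fin n} {j : ℕ}
    (ha : (a : ℕ) ≤ j) (hb : j + 1 ≤ b) (hj : isDescT pos j) :
    theta pos Δ b < theta pos Δ a := by
  have hd : dT pos (b + 1) + 1 ≤ dT pos (a + 1) := by
    have := dT_succ pos j
    rw [if_pos hj] at this
    linarith [dT_antitone pos (show j + 2 ≤ b + 1 by omega),
      dT_antitone pos (show a + 1 ≤ j + 1 by omega)]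
  have hc : ((pos b).1 : ℕ) < r := (pos b).1.2
  have ht := tailSum_antitone Δ (show (a : ℕ) ≤ b by omega)
  simp only [theta, fT]
  nlinarith

lemma theta_lt_of_level_lt (pos : Fin n → Fin r × ℕ × ℕ) (Δ : Fin n → ℕ) {a b : Fin n}
    (hab : a ≤ b) (hlt : level (pos a) < level (pos b)) : theta pos Δ b < theta pos Δ a :=
  have ⟨_, ha, hb, hj⟩ := exists_isDescT_of_level_lt pos hab hlt
  theta_lt_of_isDescT pos Δ ha hb hj

lemma theta_antitone (pos : Fin n → Fin r × ℕ × ℕ) (Δ : Fin n → ℕ) :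
    Antitone (theta pos Δ) := by
  intro a b hab
  rcases lt_or_ge (level (pos a)) (level (pos b)) with hlt | hle
  · exact (theta_lt_of_level_lt pos Δ hab hlt).le
  · have hc : (pos b).1 ≤ (pos a).1 := Prod.Lex.monotone_fst (level (pos b)) _ hle
    simp only [theta, fT]
    gcongr
    · exact dT_antitone pos (by simpa using hab)
    · exact hc
    · exact tailSum_antitone Δ hab

lemma theta_injective (pos : Fin n → Fin r × ℕ × ℕ) : Function.Injective (theta pos) := by
  intro Δ Δ' h
  apply tailSum_injective
  funext i
  by_cases hi : i < n
  · have hr : 0 < r := Fin.pos (pos ⟨i, hi⟩).1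
    have := congrFun h ⟨i, hi⟩
    simp only [theta, add_right_inj] at this
    exact Nat.eq_of_mul_eq_mul_left hr this
  · rw [tailSum_of_le _ (not_lt.mp hi), tailSum_of_le _ (not_lt.mp hi)]

noncomputable def SYTr.fillEntry (S : SYTr n r Λ) (Δ : Fin n → ℕ) (k : Fin r) (a b : ℕ) : ℕ :=
  if h : (a, b) ∈ Λ k then theta S.pos Δ (S.surj k (a, b) h).choose else 0

lemma SYTr.fillEntry_eq (S : SYTr n r Λ) (Δ : Fin n → ℕ) {m : Fin n} {k : Fin r} {a b : ℕ}
    (hm : S.pos m = (k, a, b)) : S.fillEntry Δ k a b = theta S.pos Δ m := by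
  have hmem : (a, b) ∈ Λ k := by simpa [hm] using S.mem_cells m
  rw [fillEntry, dif_pos hmem, S.inj ((S.surj k (a, b) hmem).choose_spec.trans hm.symm)]

noncomputable def SYTr.fill (S : SYTr n r Λ) (Δ : Fin n → ℕ) : RSSYTr n r Λ where
  entry := S.fillEntry Δ
  pos_entry k a b h := by
    rw [SYTr.fillEntry, dif_pos h, theta]
    omega
  zero_entry k a b h := dif_neg h
  row_weak k a b b' hb hmem := by
    obtain ⟨m, hm⟩ := S.surj k (a, b) ((Λ k).up_left_mem le_rfl hb hmem)
    obtain ⟨m', hm'⟩ := S.surj k (a, b') hmem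
    rw [S.fillEntry_eq Δ hm, S.fillEntry_eq Δ hm']
    exact theta_antitone _ _ (S.le_of_pos_le (by simp [hm, hm']) (by simp [hm, hm'])
      (by simpa [hm, hm'] using hb))
  col_strict k a a' b ha hmem := by
    obtain ⟨m, hm⟩ := S.surj k (a, b) ((Λ k).up_left_mem ha.le le_rfl hmem)
    obtain ⟨m', hm'⟩ := S.surj k (a', b) hmem
    rw [S.fillEntry_eq Δ hm, S.fillEntry_eq Δ hm']
    refine theta_lt_of_level_lt _ _ (S.le_of_pos_le (by simp [hm, hm'])
      (by simpa [hm, hm'] using ha.le) (by simp [hm, hm'])) ?_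
    simpa [level, hm, hm', Prod.Lex.toLex_lt_toLex] using ha
  congr_mod k a b h := by
    obtain ⟨m, hm⟩ := S.surj k (a, b) h
    have := theta_modEq S.pos Δ m
    rw [hm] at this
    rwa [S.fillEntry_eq Δ hm]

lemma SYTr.fill_entryAt_pos (S : SYTr n r Λ) (Δ : Fin n → ℕ) (m : Fin n) :
    (S.fill Δ).entryAt (S.pos m) = theta S.pos Δ m :=
  S.fillEntry_eq Δ rfl

/-- The standardization order on cells: decreasing entry, then increasing column. Component and
row only break ties between non-cells (all of entry `0`); they make `stdKey T` injective. -/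
def stdKey (T : RSSYTr n r Λ) (p : Fin r × ℕ × ℕ) : ℕᵒᵈ ×ₗ ℕ ×ₗ Fin r ×ₗ ℕ :=
  toLex (OrderDual.toDual (T.entryAt p), toLex (p.2.2, toLex (p.1, p.2.1)))

def cellOfKey (x : ℕᵒᵈ ×ₗ ℕ ×ₗ Fin r ×ₗ ℕ) : Fin r × ℕ × ℕ :=
  ((ofLex (ofLex (ofLex x).2).2).1, (ofLex (ofLex (ofLex x).2).2).2, (ofLex (ofLex x).2).1)

lemma cellOfKey_stdKey (T : RSSYTr n r Λ) (p : Fin r × ℕ × ℕ) : cellOfKey (stdKey T p) = p :=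
  rfl

lemma stdKey_injective (T : RSSYTr n r Λ) : Function.Injective (stdKey T) :=
  Function.LeftInverse.injective (cellOfKey_stdKey T)

lemma stdKey_lt_of_entryAt_lt (T : RSSYTr n r Λ) {p q : Fin r × ℕ × ℕ}
    (h : T.entryAt q < T.entryAt p) : stdKey T p < stdKey T q := by
  simp [stdKey, Prod.Lex.toLex_lt_toLex, h]

lemma stdKey_lt_of_col_lt (T : RSSYTr n r Λ) {p q : Fin r × ℕ × ℕ}
    (he : T.entryAt p = T.entryAt q) (h : p.2.2 < q.2.2) : stdKey T p < stdKey T q := by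
  simp [stdKey, Prod.Lex.toLex_lt_toLex, he, h]

lemma entryAt_le_of_stdKey_lt (T : RSSYTr n r Λ) {p q : Fin r × ℕ × ℕ}
    (h : stdKey T p < stdKey T q) :
    T.entryAt q ≤ T.entryAt p ∧ (T.entryAt q = T.entryAt p → p.2.2 ≤ q.2.2) := by
  simp only [stdKey, Prod.Lex.toLex_lt_toLex, OrderDual.toDual_lt_toDual,
    OrderDual.toDual_inj] at h
  rcases h with h | ⟨he, h | ⟨h, -⟩⟩
  · exact ⟨h.le, fun he => absurd he h.ne⟩
  all_goals exact ⟨he.ge, fun _ => by omega⟩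

lemma stdKey_lt_of_le (T : RSSYTr n r Λ) {p q : Fin r × ℕ × ℕ} (hq : q ∈ allCells r Λ)
    (hk : p.1 = q.1) (hrow : p.2.1 ≤ q.2.1) (hcol : p.2.2 ≤ q.2.2) (hne : p ≠ q) :
    stdKey T p < stdKey T q := by
  rcases hrow.lt_or_eq with hrow | hrow
  · exact stdKey_lt_of_entryAt_lt T (T.entryAt_lt_of_lt_of_le hq hk hrow hcol)
  have hcol : p.2.2 < q.2.2 :=
    hcol.lt_of_ne fun hcol => hne (Prod.ext hk (Prod.ext hrow hcol))
  have hle : T.entryAt q ≤ T.entryAt p := by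
    have hq := mem_allCells.mp hq
    simp only [RSSYTr.entryAt, hk, hrow]
    exact T.row_weak _ _ _ _ hcol.le hq
  rcases hle.lt_or_eq with hlt | heq
  · exact stdKey_lt_of_entryAt_lt T hlt
  · exact stdKey_lt_of_col_lt T heq.symm hcol

def IsStandardization (T : RSSYTr n r Λ) (S : SYTr n r Λ) : Prop :=
  StrictMono (stdKey T ∘ S.pos)

lemma IsStandardization.eq {T : RSSYTr n r Λ} {S S' : SYTr n r Λ}
    (hS : IsStandardization T S) (hS' : IsStandardization T S') : S = S' := by
  apply SYTr.pos_injective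
  apply (stdKey_injective T).comp_left
  rw [← hS.range_inj hS', Set.range_comp, Set.range_comp, S.range_pos, S'.range_pos]

lemma IsStandardization.entryAt_antitone {T : RSSYTr n r Λ} {S : SYTr n r Λ}
    (hS : IsStandardization T S) : Antitone (T.entryAt ∘ S.pos) := by
  intro a b hab
  rcases hab.lt_or_eq with hlt | rfl
  · exact (entryAt_le_of_stdKey_lt T (hS hlt)).1
  · rfl

lemma isStandardization_fill (S : SYTr n r Λ) (Δ : Fin n → ℕ) :
    IsStandardization (S.fill Δ) S := by
  intro m m' hlt
  rcases (theta_antitone S.pos Δ hlt.le).lt_or_eq with h | heq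
  · exact stdKey_lt_of_entryAt_lt _ (by simpa only [SYTr.fill_entryAt_pos] using h)
  refine stdKey_lt_of_col_lt _ (by simp only [SYTr.fill_entryAt_pos, heq]) ?_
  -- Equal values of `θ` force equal components and rule out a descent between `m` and `m'`.
  have hk : (S.pos m').1 = (S.pos m).1 := Fin.eq_of_val_add_one_modEq
    ((theta_modEq S.pos Δ m').symm.trans (heq ▸ theta_modEq S.pos Δ m))
  have hrow : (S.pos m').2.1 ≤ (S.pos m).2.1 := by
    have hlevel := not_lt.mp fun h => (theta_lt_of_level_lt S.pos Δ hlt.le h).ne heq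
    rcases Prod.Lex.toLex_le_toLex.mp hlevel with h | ⟨-, h⟩
    · exact absurd hk h.ne
    · exact h
  by_contra hcol
  exact hlt.not_ge (S.le_of_pos_le hk hrow (not_lt.mp hcol))

lemma card_image_stdKey (T : RSSYTr n r Λ) (hcard : ∑ k, (Λ k).card = n) :
    #((allCells r Λ).image (stdKey T)) = n := by
  rw [card_image_of_injective _ (stdKey_injective T), card_allCells, hcard]

noncomputable def stdPos (T : RSSYTr n r Λ) (hcard : ∑ k, (Λ k).card = n) (m : Fin n) :
    Fin r × ℕ × ℕ :=
  cellOfKey (((allCells r Λ).image (stdKey T)).orderEmbOfFin (card_image_stdKey T hcard) m)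

lemma stdPos_spec (T : RSSYTr n r Λ) (hcard : ∑ k, (Λ k).card = n) (m : Fin n) :
    stdPos T hcard m ∈ allCells r Λ ∧ stdKey T (stdPos T hcard m) =
      ((allCells r Λ).image (stdKey T)).orderEmbOfFin (card_image_stdKey T hcard) m := by
  obtain ⟨p, hp, hpm⟩ := mem_image.mp (orderEmbOfFin_mem _ (card_image_stdKey T hcard) m)
  rw [stdPos, ← hpm, cellOfKey_stdKey]
  exact ⟨hp, rfl⟩

lemma strictMono_stdKey_stdPos (T : RSSYTr n r Λ) (hcard : ∑ k, (Λ k).card = n) :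
    StrictMono (stdKey T ∘ stdPos T hcard) := by
  intro a b hab
  simp only [Function.comp, (stdPos_spec T hcard _).2]
  exact (orderEmbOfFin _ _).strictMono hab

noncomputable def RSSYTr.std (T : RSSYTr n r Λ) (hcard : ∑ k, (Λ k).card = n) :
    SYTr n r Λ where
  pos := stdPos T hcard
  mem_cells m := mem_allCells.mp (stdPos_spec T hcard m).1
  inj := (strictMono_stdKey_stdPos T hcard).injective.of_comp
  surj k c hc := by
    have hkey : stdKey T (k, c.1, c.2) ∈ Set.range
        (((allCells r Λ).image (stdKey T)).orderEmbOfFin (card_image_stdKey T hcard)) := by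
      rw [range_orderEmbOfFin, coe_image]
      exact Set.mem_image_of_mem _ (mem_allCells.mpr hc)
    obtain ⟨m, hm⟩ := hkey
    exact ⟨m, by rw [stdPos, hm, cellOfKey_stdKey]⟩
  row_inc i j hk hrow hcol := (strictMono_stdKey_stdPos T hcard).lt_iff_lt.mp
    (stdKey_lt_of_le T (stdPos_spec T hcard j).1 hk hrow.le hcol.le
      fun h => hcol.ne (by rw [h]))
  col_inc i j hk hcol hrow := (strictMono_stdKey_stdPos T hcard).lt_iff_lt.mp
    (stdKey_lt_of_le T (stdPos_spec T hcard j).1 hk hrow.le hcol.le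
      fun h => hrow.ne (by rw [h]))

lemma isStandardization_std (T : RSSYTr n r Λ) (hcard : ∑ k, (Λ k).card = n) :
    IsStandardization T (T.std hcard) :=
  strictMono_stdKey_stdPos T hcard

lemma IsStandardization.entryAt_add_fT_le {T : RSSYTr n r Λ} {S : SYTr n r Λ}
    (hS : IsStandardization T S) {a b : Fin n} (hb : (b : ℕ) = a + 1) :
    T.entryAt (S.pos b) + fT S.pos a ≤ T.entryAt (S.pos a) + fT S.pos b := by
  have hp : S.pos a ∈ allCells r Λ := mem_allCells.mpr (S.mem_cells a)
  have hq : S.pos b ∈ allCells r Λ := mem_allCells.mpr (S.mem_cells b)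
  obtain ⟨hle, hcol⟩ := entryAt_le_of_stdKey_lt T (hS (show a < b by omega))
  have hstep := fT_add_of_succ S.pos hb
  have hdesc := isDescT_iff (pos := S.pos) hb
  generalize S.pos a = p, S.pos b = q at *
  -- The two sides of `hmod` differ by less than `r` in one direction, so the congruence gives
  -- `≤`; at a descent the inequality is strict, which gains the extra `r`.
  have hmod : T.entryAt q + p.1 ≡ T.entryAt p + q.1 [MOD r] :=
    calc T.entryAt q + p.1 ≡ q.1 + 1 + p.1 [MOD r] := (T.entryAt_modEq hq).add_right _
      _ = p.1 + 1 + q.1 := by ring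
      _ ≡ T.entryAt p + q.1 [MOD r] := ((T.entryAt_modEq hp).add_right _).symm
  have hcp : (p.1 : ℕ) < r := p.1.2
  split_ifs at hstep with hd
  · have hlt : T.entryAt q + p.1 < T.entryAt p + q.1 := by
      rcases Prod.Lex.toLex_lt_toLex.mp (hdesc.mp hd) with hc | ⟨hc, hrow⟩
      · have hc : (p.1 : ℕ) < q.1 := hc
        omega
      · have hlt : T.entryAt q < T.entryAt p := hle.lt_of_ne fun he =>
          (T.entryAt_lt_of_lt_of_le hq hc hrow (hcol he)).ne he
        have hc : p.1 = q.1 := hc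
        rw [hc]
        omega
    have := hmod.add_le_of_lt hlt
    omega
  · have := hmod.le_of_lt_add (by omega)
    omega

lemma IsStandardization.exists_fill_eq {T : RSSYTr n r Λ} {S : SYTr n r Λ}
    (hS : IsStandardization T S) : ∃ Δ, S.fill Δ = T := by
  have hmem (m : Fin n) : S.pos m ∈ allCells r Λ := mem_allCells.mpr (S.mem_cells m)
  -- `θ_i - f_i - 1`, extended by `0` at `i = n` (the paper's convention `θ_{n+1} = 1`).
  let a : ℕ → ℤ := fun i =>
    if h : i < n then T.entryAt (S.pos ⟨i, h⟩) - (fT S.pos ⟨i, h⟩ + 1) else 0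
  have hdvd (i : ℕ) : (r : ℤ) ∣ a i := by
    by_cases h : i < n
    · simp only [a, dif_pos h]
      exact Nat.modEq_iff_dvd.mp
        (((fT_modEq S.pos _).add_right 1).trans (T.entryAt_modEq (hmem _)).symm)
    · simp [a, h]
  have hstep (i : ℕ) (hi : i < n) : a (i + 1) ≤ a i := by
    simp only [a, dif_pos hi]
    by_cases h : i + 1 < n
    · have := hS.entryAt_add_fT_le (a := ⟨i, hi⟩) (b := ⟨i + 1, h⟩) rfl
      simp only [dif_pos h]
      omega
    · have := T.comp_add_one_le_entryAt (hmem ⟨i, hi⟩)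
      rw [dif_neg h, fT_of_succ_eq _ (show i + 1 = n by omega)]
      omega
  obtain ⟨Δ, hΔ⟩ := exists_eq_mul_tailSum a hdvd hstep (dif_neg (lt_irrefl n))
  refine ⟨Δ, RSSYTr.eq_of_entryAt_pos_eq S fun m => ?_⟩
  have := hΔ m m.2.le
  simp only [a, dif_pos m.2, Fin.eta] at this
  rw [S.fill_entryAt_pos, theta]
  omega

lemma thetaP_eq_of_antitone (T : RSSYTr n r Λ) (S : SYTr n r Λ)
    (h : Antitone (T.entryAt ∘ S.pos)) (m : Fin n) :
    thetaP Λ T m = T.entryAt (S.pos m) := by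
  have hentries : ∑ k, ((Λ k).cells.val.map fun c => T.entry k c.1 c.2) =
      ↑(List.ofFn (T.entryAt ∘ S.pos)).reverse := by
    rw [sum_map_cells_eq_map_allCells, ← S.map_univ_pos, map_val, Multiset.map_map,
      Multiset.coe_reverse, Fin.univ_val_map]
    rfl
  have hsorted : (List.ofFn (T.entryAt ∘ S.pos)).reverse.Pairwise (· ≤ ·) :=
    List.pairwise_reverse.mpr (List.pairwise_ofFn.mpr fun _ _ hij => h hij.le)
  rw [thetaP, entriesList, hentries, Multiset.coe_sort,
    List.mergeSort_eq_self (r := fun a b : ℕ => a ≤ b) hsorted, List.reverse_reverse,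
    List.getD_eq_getElem _ _ (by simp), List.getElem_ofFn]
  rfl

lemma fill_injective :
    Function.Injective fun x : SYTr n r Λ × (Fin n → ℕ) => x.1.fill x.2 := by
  rintro ⟨S, Δ⟩ ⟨S', Δ'⟩ (h : S.fill Δ = S'.fill Δ')
  obtain rfl : S = S' := (isStandardization_fill S Δ).eq (h ▸ isStandardization_fill S' Δ')
  refine Prod.ext rfl (theta_injective S.pos (funext fun m => ?_))
  rw [← S.fill_entryAt_pos, ← S.fill_entryAt_pos]
  exact congrArg (RSSYTr.entryAt · (S.pos m)) h

lemma thetaP_fill (S : SYTr n r Λ) (Δ : Fin n → ℕ) (m : Fin n) :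
    thetaP Λ (S.fill Δ) m = theta S.pos Δ m :=
  (thetaP_eq_of_antitone _ S (isStandardization_fill S Δ).entryAt_antitone m).trans
    (S.fill_entryAt_pos Δ m)

end Tableaux

open Tableaux in
theorem rssyt_bijection_general (n r : ℕ) (Λ : Fin r → YoungDiagram)
    (hcard : ∑ k : Fin r, (Λ k).card = n) :
    ∃ φ : RSSYTr n r Λ ≃ SYTr n r Λ × (Fin n → ℕ),
      ∀ T : RSSYTr n r Λ,
        (∀ i : Fin n,
          T.entry ((φ T).1.pos i).1 ((φ T).1.pos i).2.1 ((φ T).1.pos i).2.2 =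
            thetaP Λ T (i : ℕ)) ∧
        (∀ i : Fin n,
          thetaP Λ T (i : ℕ) - 1 =
            fT (φ T).1.pos i +
              ∑ j ∈ Finset.univ.filter fun j : Fin n => i ≤ j, r * (φ T).2 j) := by
  have hbij : Function.Bijective fun x : SYTr n r Λ × (Fin n → ℕ) => x.1.fill x.2 :=
    ⟨fill_injective, fun T =>
      have ⟨Δ, h⟩ := (isStandardization_std T hcard).exists_fill_eq
      ⟨(_, Δ), h⟩⟩
  refine ⟨(Equiv.ofBijective _ hbij).symm, fun T => ?_⟩
  obtain ⟨⟨S, Δ⟩, rfl⟩ := hbij.2 T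
  rw [Equiv.ofBijective_symm_apply_apply]
  refine ⟨fun i => (S.fill_entryAt_pos Δ i).trans (thetaP_fill S Δ i).symm, fun i => ?_⟩
  rw [thetaP_fill, theta, tailSum, Finset.mul_sum, add_assoc, Nat.add_sub_cancel_left]
  rfl

open Tableaux in
/-- The map `φ_Λ`, `T ↦ (T', Δ)` with `T'` the standardization of `T`
(entry `i` of `T'` in the cell where `T` has `θ_i`) and
`Δ_i = (θ_i − f_i(T') − θ_{i+1} + f_{i+1}(T'))/r`, is a bijection
`RSSYT(Λ) ≃ SYT(Λ) × ℕ^n`; moreover `θ_i − 1 = f_i(T') + Σ_{j ≥ i} r·Δ_j` for all `i`. -/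
theorem rssyt_bijection (n r : ℕ) (hr : 0 < r) (Λ : Fin r → YoungDiagram)
    (hcard : ∑ k : Fin r, (Λ k).card = n) :
    ∃ φ : RSSYTr n r Λ ≃ SYTr n r Λ × (Fin n → ℕ),
      ∀ T : RSSYTr n r Λ,
        (∀ i : Fin n,
          T.entry ((φ T).1.pos i).1 ((φ T).1.pos i).2.1 ((φ T).1.pos i).2.2 =
            thetaP Λ T (i : ℕ)) ∧
        (∀ i : Fin n,
          thetaP Λ T (i : ℕ) - 1 =
            fT (φ T).1.pos i +
              ∑ j ∈ Finset.univ.filter fun j : Fin n => i ≤ j, r * (φ T).2 j) :=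
  rssyt_bijection_general n r Λ hcard
end

section
/- (Carlitz identity for G(r,p,n)) Σ_{k ≥ 0} [k+1]_q^n t^k = [Σ_{h ∈ G(r,p,n)} t^{fdes(h)} q^{fmaj(h)}] / [(1−t)(1−t^r q^r)(1−t^r q^{2r})···(1−t^r q^{(n-1)r})(1−t^d q^{nd})], where [m]_q = 1 + q + ... + q^{m-1}. -/
open Finset

namespace ColoredPerm

/-- The power series `Σ_{k ≥ 0} [k+1]_q^n t^k` in variables `q = X 0`, `t = X 1`:
its coefficient on `q^a t^k` is the coefficient of `q^a` in `([k+1]_q)^n`. -/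
noncomputable def carlitzLHS (n : ℕ) : MvPowerSeries (Fin 2) ℂ :=
  fun m => ((∑ j ∈ Finset.range (m 1 + 1), (Polynomial.X : Polynomial ℂ) ^ j) ^ n).coeff (m 0)

end ColoredPerm

namespace CarlitzAux
open MvPowerSeries

/-- Exponent finsupp: `q`-exponent `a` at index 0, `t`-exponent `b` at index 1. -/
noncomputable def e2 (a b : ℕ) : Fin 2 →₀ ℕ := Finsupp.single 0 a + Finsupp.single 1 b

@[simp] lemma e2_apply0 (a b : ℕ) : e2 a b 0 = a := by
  simp [e2, Finsupp.single_apply]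

@[simp] lemma e2_apply1 (a b : ℕ) : e2 a b 1 = b := by
  simp [e2, Finsupp.single_apply]

lemma eq_e2 (μ : Fin 2 →₀ ℕ) : μ = e2 (μ 0) (μ 1) := by
  ext i
  fin_cases i <;> simp

lemma e2_ext {a b a' b' : ℕ} (h0 : a = a') (h1 : b = b') : e2 a b = e2 a' b' := by rw [h0, h1]

lemma e2_le_iff {a b : ℕ} {μ : Fin 2 →₀ ℕ} : e2 a b ≤ μ ↔ a ≤ μ 0 ∧ b ≤ μ 1 := by
  rw [Finsupp.le_def]
  constructor
  · intro h; exact ⟨by simpa using h 0, by simpa using h 1⟩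
  · rintro ⟨h0, h1⟩ i
    fin_cases i <;> simpa

@[simp] lemma e2_zero : e2 0 0 = 0 := by
  ext i; fin_cases i <;> simp

lemma e2_eq_zero_iff {a b : ℕ} : e2 a b = 0 ↔ a = 0 ∧ b = 0 := by
  constructor
  · intro h
    constructor
    · have := DFunLike.congr_fun h 0; simpa using this
    · have := DFunLike.congr_fun h 1; simpa using this
  · rintro ⟨rfl, rfl⟩; simp

open scoped Classical in
/-- The geometric series `Σ_m (X 1)^{a m} (X 0)^{b m}`. -/
noncomputable def geom (a b : ℕ) : MvPowerSeries (Fin 2) ℂ :=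
  fun μ => if ∃ m : ℕ, μ = e2 (b * m) (a * m) then 1 else 0

open scoped Classical in
lemma coeff_geom (a b : ℕ) (μ : Fin 2 →₀ ℕ) :
    coeff μ (geom a b) = if ∃ m : ℕ, μ = e2 (b * m) (a * m) then 1 else 0 := by
  rw [coeff_apply]; rfl

lemma X_pow_mul_X_pow_eq (a b : ℕ) :
    (X 1 ^ a * X 0 ^ b : MvPowerSeries (Fin 2) ℂ) = monomial (e2 b a) 1 := by
  rw [X_pow_eq, X_pow_eq, monomial_mul_monomial, mul_one]
  congr 1
  rw [e2, add_comm]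

lemma one_sub_mul_geom (a b : ℕ) (ha : 0 < a) :
    ((1 : MvPowerSeries (Fin 2) ℂ) - X 1 ^ a * X 0 ^ b) * geom a b = 1 := by
  classical
  rw [X_pow_mul_X_pow_eq]
  ext μ
  rw [sub_mul, one_mul, map_sub, coeff_monomial_mul, coeff_geom, coeff_one]
  by_cases h1 : ∃ m : ℕ, μ = e2 (b * m) (a * m)
  · rw [if_pos h1]
    obtain ⟨m, rfl⟩ := h1
    rcases m with _ | m'
    · have h2 : ¬ (e2 b a ≤ e2 (b * 0) (a * 0)) := by
        rw [e2_le_iff, e2_apply0, e2_apply1]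
        simp only [mul_zero]
        omega
      rw [if_neg h2, if_pos (by simp)]
      ring
    · have hle : e2 b a ≤ e2 (b * (m' + 1)) (a * (m' + 1)) := by
        rw [e2_le_iff, e2_apply0, e2_apply1]
        constructor <;> nlinarith
      rw [if_pos hle]
      have hsub : e2 (b * (m' + 1)) (a * (m' + 1)) - e2 b a = e2 (b * m') (a * m') := by
        ext i
        fin_cases i <;>
          · simp [Finsupp.tsub_apply, Nat.mul_succ]
      rw [hsub, coeff_geom, if_pos ⟨m', rfl⟩]
      have hne : e2 (b * (m' + 1)) (a * (m' + 1)) ≠ 0 := by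
        rw [Ne, e2_eq_zero_iff]
        rintro ⟨-, h⟩
        rw [Nat.mul_eq_zero] at h
        omega
      rw [if_neg hne]
      ring
  · rw [if_neg h1]
    have hne : μ ≠ 0 := by
      rintro rfl
      exact h1 ⟨0, by simp⟩
    rw [if_neg hne]
    by_cases hle : e2 b a ≤ μ
    · rw [if_pos hle, coeff_geom, if_neg]
      · ring
      · rintro ⟨m, hm⟩
        apply h1
        refine ⟨m + 1, ?_⟩
        have h0 : μ 0 = b * m + b := by
          have := DFunLike.congr_fun hm 0
          simp only [Finsupp.tsub_apply, e2_apply0] at this ⊢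
          have := e2_le_iff.mp hle
          omega
        have h1' : μ 1 = a * m + a := by
          have := DFunLike.congr_fun hm 1
          simp only [Finsupp.tsub_apply, e2_apply1] at this ⊢
          have := e2_le_iff.mp hle
          omega
        rw [eq_e2 μ, h0, h1']
        apply e2_ext <;> ring
    · rw [if_neg hle]
      ring


/-- Weight on the `t`-exponent for the `i`-th geometric factor. -/
def wN (r d n : ℕ) : ℕ → ℕ := fun i => if i = 0 then 1 else if i = n then d else r

/-- Weight on the `q`-exponent for the `i`-th geometric factor. -/
def vN (r d n : ℕ) : ℕ → ℕ := fun i => if i = 0 then 0 else if i = n then n * d else i * r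

lemma wN_pos {r d : ℕ} (hr : 0 < r) (hd : 0 < d) (n i : ℕ) : 0 < wN r d n i := by
  unfold wN; split_ifs <;> omega

/-- Extension of `m : Fin (n+1) → ℕ` to `ℕ` by zero. -/
def mmF {n : ℕ} (m : Fin (n + 1) → ℕ) : ℕ → ℕ :=
  fun i => if h : i < n + 1 then m ⟨i, h⟩ else 0

@[simp] lemma mmF_coe {n : ℕ} (m : Fin (n + 1) → ℕ) (i : Fin (n + 1)) :
    mmF m (i : ℕ) = m i := by
  simp [mmF, i.isLt]

/-- The big product of geometric series. -/
noncomputable def Gser (r d n : ℕ) : MvPowerSeries (Fin 2) ℂ :=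
  ∏ i ∈ Finset.range (n + 1), geom (wN r d n i) (vN r d n i)

/-- The counting set matching the coefficients of `Gser`. -/
def Mcnt (r d n : ℕ) (t0 q0 k : ℕ) : Finset (Fin (n + 1) → ℕ) :=
  (Fintype.piFinset fun _ : Fin (n + 1) => Finset.range (k + 1)).filter fun m =>
    (∑ i ∈ Finset.range (n + 1), wN r d n i * mmF m i) = t0 ∧
    (∑ i ∈ Finset.range (n + 1), vN r d n i * mmF m i) = q0

lemma sum_singles_apply {M : Type*} [AddCommMonoid M] (s : Finset ℕ) (f : ℕ → M) (j : ℕ) :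
    (∑ i ∈ s, Finsupp.single i (f i)) j = if j ∈ s then f j else 0 := by
  rw [Finsupp.finset_sum_apply]
  rw [Finset.sum_ite_eq' s j (fun i => f i) |>.symm]
  · apply Finset.sum_congr rfl
    intro i _
    rw [Finsupp.single_apply]

lemma sum_indicator {ι : Type*} (s : Finset ι) (P : ι → Prop) [DecidablePred P] :
    (∑ x ∈ s, if P x then (1 : ℂ) else 0) = ((s.filter P).card : ℂ) := by
  rw [Finset.card_filter]
  push_cast
  apply Finset.sum_congr rfl
  intro x _
  split_ifs <;> simp

set_option maxHeartbeats 1000000 in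
open scoped Classical in
lemma coeff_Gser {r d n : ℕ} (hr : 0 < r) (hd : 0 < d) (ν : Fin 2 →₀ ℕ) (k : ℕ)
    (hk : ν 1 ≤ k) :
    coeff ν (Gser r d n) = ((Mcnt r d n (ν 1) (ν 0) k).card : ℂ) := by
  have hsh : ∀ l ∈ finsuppAntidiag (Finset.range (n + 1)) ν,
      (∏ i ∈ Finset.range (n + 1), coeff (l i) (geom (wN r d n i) (vN r d n i))) =
      if (∀ i ∈ Finset.range (n + 1), ∃ m : ℕ, l i = e2 (vN r d n i * m) (wN r d n i * m))
        then (1 : ℂ) else 0 := by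
    intro l _
    calc (∏ i ∈ Finset.range (n + 1), coeff (l i) (geom (wN r d n i) (vN r d n i)))
        = ∏ i ∈ Finset.range (n + 1),
            if (∃ m : ℕ, l i = e2 (vN r d n i * m) (wN r d n i * m)) then (1:ℂ) else 0 :=
          Finset.prod_congr rfl fun i _ => coeff_geom _ _ _
      _ = _ := Finset.prod_boole.trans (by congr)
  calc coeff ν (Gser r d n)
      = ∑ l ∈ finsuppAntidiag (Finset.range (n + 1)) ν,
          ∏ i ∈ Finset.range (n + 1), coeff (l i) (geom (wN r d n i) (vN r d n i)) := by
        rw [Gser, coeff_prod]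
    _ = ∑ l ∈ finsuppAntidiag (Finset.range (n + 1)) ν,
          if (∀ i ∈ Finset.range (n + 1), ∃ m : ℕ, l i = e2 (vN r d n i * m) (wN r d n i * m))
            then (1 : ℂ) else 0 :=
          Finset.sum_congr rfl fun l hl => (hsh l hl).trans (by congr)
    _ = (((finsuppAntidiag (Finset.range (n + 1)) ν).filter fun l =>
          ∀ i ∈ Finset.range (n + 1), ∃ m : ℕ,
            l i = e2 (vN r d n i * m) (wN r d n i * m)).card : ℂ) :=
          by convert (sum_indicator _ _)
    _ = ((Mcnt r d n (ν 1) (ν 0) k).card : ℂ) := by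
        norm_cast
        apply Finset.card_nbij'
          (i := fun l => fun j : Fin (n + 1) => (l (j : ℕ)) 1 / wN r d n (j : ℕ))
          (j := fun m => ∑ i ∈ Finset.range (n + 1),
            Finsupp.single i (e2 (vN r d n i * mmF m i) (wN r d n i * mmF m i)))
        · -- forward membership
          intro l hl
          simp only [Finset.mem_coe, Finset.mem_filter, mem_finsuppAntidiag] at hl
          obtain ⟨⟨hsum, hsupp⟩, hshape⟩ := hl
          have hval : ∀ i ∈ Finset.range (n + 1),
              (l i) 1 = wN r d n i * ((l i) 1 / wN r d n i) ∧
              (l i) 0 = vN r d n i * ((l i) 1 / wN r d n i) := by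
            intro i hi
            obtain ⟨m, hm⟩ := hshape i hi
            rw [hm, e2_apply0, e2_apply1, Nat.mul_div_cancel_left m (wN_pos hr hd n i)]
            exact ⟨rfl, rfl⟩
          have hs1 : ∑ i ∈ Finset.range (n + 1), wN r d n i * mmF (fun j : Fin (n+1) =>
              (l (j : ℕ)) 1 / wN r d n (j : ℕ)) i = ν 1 := by
            have : ∀ i ∈ Finset.range (n + 1), wN r d n i * mmF (fun j : Fin (n+1) =>
                (l (j : ℕ)) 1 / wN r d n (j : ℕ)) i = (l i) 1 := by
              intro i hi
              have hin : i < n + 1 := Finset.mem_range.mp hi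
              rw [mmF, dif_pos hin]
              exact ((hval i hi).1).symm
            rw [Finset.sum_congr rfl this, ← Finsupp.finset_sum_apply, hsum]
          have hs0 : ∑ i ∈ Finset.range (n + 1), vN r d n i * mmF (fun j : Fin (n+1) =>
              (l (j : ℕ)) 1 / wN r d n (j : ℕ)) i = ν 0 := by
            have : ∀ i ∈ Finset.range (n + 1), vN r d n i * mmF (fun j : Fin (n+1) =>
                (l (j : ℕ)) 1 / wN r d n (j : ℕ)) i = (l i) 0 := by
              intro i hi
              have hin : i < n + 1 := Finset.mem_range.mp hi
              rw [mmF, dif_pos hin]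
              exact ((hval i hi).2).symm
            rw [Finset.sum_congr rfl this, ← Finsupp.finset_sum_apply, hsum]
          rw [Finset.mem_coe, Mcnt, Finset.mem_filter]
          refine ⟨?_, hs1, hs0⟩
          rw [Fintype.mem_piFinset]
          intro j
          rw [Finset.mem_range]
          have hj : (j : ℕ) ∈ Finset.range (n + 1) := Finset.mem_range.mpr j.isLt
          have hle : wN r d n (j : ℕ) * ((l (j : ℕ)) 1 / wN r d n (j : ℕ)) ≤ ν 1 := by
            calc wN r d n (j : ℕ) * ((l (j : ℕ)) 1 / wN r d n (j : ℕ)) = (l (j : ℕ)) 1 :=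
                  ((hval _ hj).1).symm
              _ ≤ ∑ i ∈ Finset.range (n + 1), (l i) 1 :=
                  Finset.single_le_sum (f := fun i => (l i) 1) (fun i _ => Nat.zero_le _) hj
              _ = ν 1 := by rw [← Finsupp.finset_sum_apply, hsum]
          have := wN_pos hr hd n (j : ℕ)
          calc (l (j : ℕ)) 1 / wN r d n (j : ℕ)
              ≤ wN r d n (j : ℕ) * ((l (j : ℕ)) 1 / wN r d n (j : ℕ)) := Nat.le_mul_of_pos_left _ this
            _ ≤ ν 1 := hle
            _ < k + 1 := by omega
        · -- backward membership
          intro m hm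
          rw [Finset.mem_coe, Mcnt, Finset.mem_filter] at hm
          obtain ⟨-, hs1, hs0⟩ := hm
          simp only [Finset.mem_coe, Finset.mem_filter, mem_finsuppAntidiag]
          refine ⟨⟨?_, ?_⟩, ?_⟩
          · -- sum equals ν
            have : ∀ j ∈ Finset.range (n + 1),
                (∑ i ∈ Finset.range (n + 1),
                  Finsupp.single i (e2 (vN r d n i * mmF m i) (wN r d n i * mmF m i))) j
                = e2 (vN r d n j * mmF m j) (wN r d n j * mmF m j) := by
              intro j hj
              rw [sum_singles_apply, if_pos hj]
            rw [eq_e2 ν, ← hs0, ← hs1]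
            rw [Finset.sum_congr rfl (fun j hj => this j hj)]
            induction (Finset.range (n+1)) using Finset.induction_on with
            | empty => simp
            | insert _ _ hnotin ih =>
                rw [Finset.sum_insert hnotin, Finset.sum_insert hnotin, Finset.sum_insert hnotin, ih]
                ext i
                fin_cases i <;> simp [Finsupp.add_apply]
          · -- support
            intro x hx
            by_contra hx'
            have : (∑ i ∈ Finset.range (n + 1),
                Finsupp.single i (e2 (vN r d n i * mmF m i) (wN r d n i * mmF m i))) x = 0 := by
              rw [sum_singles_apply, if_neg hx']
            exact (Finsupp.mem_support_iff.mp hx) this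
          · intro i hi
            exact ⟨mmF m i, by rw [sum_singles_apply, if_pos hi]⟩
        · -- left inverse
          intro l hl
          simp only [Finset.mem_coe, Finset.mem_filter, mem_finsuppAntidiag] at hl
          obtain ⟨⟨hsum, hsupp⟩, hshape⟩ := hl
          beta_reduce
          ext x : 1
          by_cases hx : x ∈ Finset.range (n + 1)
          · rw [sum_singles_apply, if_pos hx]
            obtain ⟨m, hm⟩ := hshape x hx
            have hin : x < n + 1 := Finset.mem_range.mp hx
            rw [hm]
            congr 1 <;>
            · rw [mmF, dif_pos hin]
              rw [hm, e2_apply1, Nat.mul_div_cancel_left m (wN_pos hr hd n x)]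
          · rw [sum_singles_apply, if_neg hx]
            by_contra hne
            exact hx (hsupp (Finsupp.mem_support_iff.mpr fun h => hne h.symm))
        · -- right inverse
          intro m hm
          funext j
          have hj : (j : ℕ) ∈ Finset.range (n + 1) := Finset.mem_range.mpr j.isLt
          beta_reduce
          rw [sum_singles_apply, if_pos hj, e2_apply1, mmF_coe,
            Nat.mul_div_cancel_left _ (wN_pos hr hd n (j : ℕ))]

section Stats
open ColoredPerm

variable {r n : ℕ}

/-- Total version of the color at position `j`. -/
def colN (γ : CPerm r n) (j : ℕ) : ℕ := if h : j < n then (γ.1 ⟨j, h⟩ : ℕ) else 0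

/-- Total version of `fstat`. -/
def fstatN (γ : CPerm r n) (j : ℕ) : ℕ := r * dstat γ (j + 1) + colN γ j

lemma mem_Des_iff (γ : CPerm r n) (j : ℕ) : j ∈ Des γ ↔ isDesc γ j := by
  rw [Des, Finset.mem_filter, Finset.mem_range]
  constructor
  · exact fun h => h.2
  · intro h
    obtain ⟨hlt, -⟩ := id h
    exact ⟨Nat.lt_of_succ_lt hlt, h⟩

lemma mem_Des_succ_lt {γ : CPerm r n} {j : ℕ} (h : j ∈ Des γ) : j + 1 < n := by
  rw [mem_Des_iff] at h
  exact h.1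

lemma dstat_eq_zero (γ : CPerm r n) {t : ℕ} (ht : n ≤ t) : dstat γ t = 0 := by
  rw [dstat, Finset.card_eq_zero, Finset.filter_eq_empty_iff]
  intro j hj
  have := mem_Des_succ_lt hj
  omega

lemma dstat_one (γ : CPerm r n) : dstat γ 1 = des γ := by
  rw [dstat, des]
  congr 1
  apply Finset.filter_true_of_mem
  intro j _
  omega

lemma dstat_step (γ : CPerm r n) (j : ℕ) :
    dstat γ (j + 1) = dstat γ (j + 2) + (if isDesc γ j then 1 else 0) := by
  classical
  rw [dstat, dstat]
  have hsplit : (Des γ).filter (fun j' => j + 1 ≤ j' + 1)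
      = (Des γ).filter (fun j' => j + 2 ≤ j' + 1) ∪ (Des γ).filter (fun j' => j' = j) := by
    ext j'
    simp only [Finset.mem_filter, Finset.mem_union]
    constructor
    · rintro ⟨hmem, hle⟩
      rcases Nat.lt_or_ge j' (j + 1) with h | h
      · exact Or.inr ⟨hmem, by omega⟩
      · exact Or.inl ⟨hmem, by omega⟩
    · rintro (⟨hmem, hle⟩ | ⟨hmem, rfl⟩)
      · exact ⟨hmem, by omega⟩
      · exact ⟨hmem, by omega⟩
  have hdisj : Disjoint ((Des γ).filter (fun j' => j + 2 ≤ j' + 1))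
      ((Des γ).filter (fun j' => j' = j)) := by
    rw [Finset.disjoint_left]
    intro x hx1 hx2
    rw [Finset.mem_filter] at hx1 hx2
    omega
  rw [hsplit, Finset.card_union_of_disjoint hdisj, Finset.filter_eq']
  congr 1
  split_ifs with h1 h2 h2
  · simp
  · rw [mem_Des_iff] at h1; exact absurd h1 h2
  · rw [← mem_Des_iff] at h2; exact absurd h2 h1
  · simp

lemma maj_eq_sum (γ : CPerm r n) : maj γ = ∑ j ∈ Finset.range n, dstat γ (j + 1) := by
  classical
  unfold maj dstat
  have : ∀ j ∈ Finset.range n, ((Des γ).filter fun j' => j + 1 ≤ j' + 1).card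
      = ∑ j' ∈ Des γ, if j + 1 ≤ j' + 1 then 1 else 0 := by
    intro j _
    rw [Finset.card_filter]
  rw [Finset.sum_congr rfl this, Finset.sum_comm]
  apply Finset.sum_congr rfl
  intro j' hj'
  have hlt : j' + 1 < n := mem_Des_succ_lt hj'
  have : ∀ j ∈ Finset.range n, (if j + 1 ≤ j' + 1 then 1 else 0) = if j ≤ j' then 1 else 0 := by
    intro j _
    congr 1
    simp [Nat.succ_le_succ_iff]
  rw [Finset.sum_congr rfl this, ← Finset.card_filter]
  have : (Finset.range n).filter (fun j => j ≤ j') = Finset.range (j' + 1) := by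
    ext x
    simp only [Finset.mem_filter, Finset.mem_range]
    omega
  rw [this, Finset.card_range]

lemma col_eq_sum (γ : CPerm r n) : col γ = ∑ j ∈ Finset.range n, colN γ j := by
  rw [col, ← Fin.sum_univ_eq_sum_range]
  apply Finset.sum_congr rfl
  intro i _
  rw [colN, dif_pos i.isLt]

lemma fmaj_eq_sum (γ : CPerm r n) : fmaj γ = ∑ j ∈ Finset.range n, fstatN γ j := by
  unfold fmaj fstatN
  rw [Finset.sum_add_distrib, ← Finset.mul_sum, ← maj_eq_sum, ← col_eq_sum]

lemma fdes_eq (γ : CPerm r n) (hn : 0 < n) : fdes γ hn = fstatN γ 0 := by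
  rw [fdes, fstatN, dstat_one, colN, dif_pos hn]

lemma colN_lt (γ : CPerm r n) {j : ℕ} (hj : j < n) : colN γ j < r := by
  rw [colN, dif_pos hj]
  exact (γ.1 ⟨j, hj⟩).isLt

lemma fstatN_step (γ : CPerm r n) {j : ℕ} (hj : j + 1 < n) :
    fstatN γ j + colN γ (j + 1) =
      fstatN γ (j + 1) + colN γ j + r * (if isDesc γ j then 1 else 0) := by
  unfold fstatN
  rw [dstat_step γ j]
  ring

lemma isDesc_colN_le {γ : CPerm r n} {j : ℕ} (h : isDesc γ j) :
    colN γ j ≤ colN γ (j + 1) := by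
  obtain ⟨hlt, hor⟩ := h
  rw [colN, colN, dif_pos hlt, dif_pos (Nat.lt_of_succ_lt hlt)]
  rcases hor with h | ⟨h, -⟩
  · exact le_of_lt h
  · exact le_of_eq (congrArg _ h)

lemma not_isDesc_colN_ge {γ : CPerm r n} {j : ℕ} (hlt : j + 1 < n) (h : ¬ isDesc γ j) :
    colN γ (j + 1) ≤ colN γ j := by
  rw [colN, colN, dif_pos hlt, dif_pos (Nat.lt_of_succ_lt hlt)]
  by_contra hcon
  push_neg at hcon
  exact h ⟨hlt, Or.inl hcon⟩

lemma fstatN_antitone_step (γ : CPerm r n) {j : ℕ} (hj : j + 1 < n) :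
    fstatN γ (j + 1) + (if isDesc γ j then 1 else 0) ≤ fstatN γ j := by
  have hstep := fstatN_step γ hj
  by_cases h : isDesc γ j
  · have h1 := isDesc_colN_le h
    have h2 := colN_lt γ hj
    rw [if_pos h] at hstep ⊢
    omega
  · have h1 := not_isDesc_colN_ge hj h
    rw [if_neg h] at hstep ⊢
    omega

end Stats

section Bij
open ColoredPerm

variable {r d n : ℕ}

/-- Suffix sums of the middle multiplicities. -/
def Suf {n : ℕ} (m : Fin (n + 1) → ℕ) (t : ℕ) : ℕ := ∑ i ∈ Finset.Icc t (n - 1), mmF m i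

/-- The weakly decreasing sequence associated to `(γ, m)`. -/
def gseq (d : ℕ) (γ : CPerm r n) (m : Fin (n + 1) → ℕ) (j : ℕ) : ℕ :=
  fstatN γ j + r * Suf m (j + 1) + d * mmF m n

/-- The forward map of the bijection. -/
def Phi (d : ℕ) (γ : CPerm r n) (m : Fin (n + 1) → ℕ) : Fin n → ℕ :=
  fun i => gseq d γ m ((γ.2⁻¹ i : Fin n) : ℕ)

/-- The target counting set: functions `Fin n → {0,…,k}` with sum `a`. -/
def Ffin (n k a : ℕ) : Finset (Fin n → ℕ) :=
  (Fintype.piFinset fun _ : Fin n => Finset.range (k + 1)).filter fun f => ∑ i, f i = a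

/-- The source counting set for a fixed `γ`. -/
def Mset (d : ℕ) (γ : CPerm r n) (hn : 0 < n) (k a : ℕ) : Finset (Fin (n + 1) → ℕ) :=
  (Fintype.piFinset fun _ : Fin (n + 1) => Finset.range (k + 1)).filter fun m =>
    fdes γ hn + ∑ i ∈ Finset.range (n + 1), wN r d n i * mmF m i = k ∧
    fmaj γ + ∑ i ∈ Finset.range (n + 1), vN r d n i * mmF m i = a

/-- `Γ(r,p,n)` in terms of `d`. -/
def GammaD (r d n : ℕ) (hn : 0 < n) : Finset (CPerm r n) :=
  Finset.univ.filter fun g => colN g (n - 1) < d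

lemma Gamma_eq_GammaD (r p n : ℕ) (hn : 0 < n) :
    Gamma r p n hn = GammaD r (r / p) n hn := by
  ext g
  rw [Gamma, GammaD, Finset.mem_filter, Finset.mem_filter, colN, dif_pos (Nat.sub_lt hn one_pos)]

lemma range_succ_split (hn : 0 < n) :
    Finset.range (n + 1) = insert 0 (insert n (Finset.Icc 1 (n - 1))) := by
  ext x
  simp only [Finset.mem_range, Finset.mem_insert, Finset.mem_Icc]
  omega

lemma zero_not_mem_insert (hn : 0 < n) : 0 ∉ insert n (Finset.Icc 1 (n - 1)) := by
  simp only [Finset.mem_insert, Finset.mem_Icc]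
  omega

lemma n_not_mem_Icc : n ∉ Finset.Icc 1 (n - 1) := by
  simp only [Finset.mem_Icc]
  omega

lemma sum_wN_split (hn : 0 < n) (m : Fin (n + 1) → ℕ) :
    ∑ i ∈ Finset.range (n + 1), wN r d n i * mmF m i
      = mmF m 0 + (r * Suf m 1 + d * mmF m n) := by
  rw [range_succ_split hn, Finset.sum_insert (zero_not_mem_insert hn),
    Finset.sum_insert n_not_mem_Icc]
  have h0 : wN r d n 0 = 1 := by simp [wN]
  have h1 : wN r d n n = d := by rw [wN, if_neg (by omega), if_pos rfl]
  have h2 : ∀ i ∈ Finset.Icc 1 (n - 1), wN r d n i * mmF m i = r * mmF m i := by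
    intro i hi
    rw [Finset.mem_Icc] at hi
    have : wN r d n i = r := by
      rw [wN]
      rw [if_neg (by omega), if_neg (by omega)]
    rw [this]
  rw [Finset.sum_congr rfl h2, h0, h1, Suf, ← Finset.mul_sum, one_mul]
  ring

lemma sum_vN_split (hn : 0 < n) (m : Fin (n + 1) → ℕ) :
    ∑ i ∈ Finset.range (n + 1), vN r d n i * mmF m i
      = r * (∑ i ∈ Finset.Icc 1 (n - 1), i * mmF m i) + n * (d * mmF m n) := by
  rw [range_succ_split hn, Finset.sum_insert (zero_not_mem_insert hn),
    Finset.sum_insert n_not_mem_Icc]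
  have h0 : vN r d n 0 = 0 := by simp [vN]
  have h1 : vN r d n n = n * d := by rw [vN, if_neg (by omega), if_pos rfl]
  have h2 : ∀ i ∈ Finset.Icc 1 (n - 1), vN r d n i * mmF m i = r * (i * mmF m i) := by
    intro i hi
    rw [Finset.mem_Icc] at hi
    have : vN r d n i = i * r := by
      rw [vN]
      rw [if_neg (by omega), if_neg (by omega)]
    rw [this]
    ring
  rw [Finset.sum_congr rfl h2, h0, h1, ← Finset.mul_sum]
  ring

lemma Suf_step (m : Fin (n + 1) → ℕ) {t : ℕ} (ht : t ≤ n - 1) :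
    Suf m t = mmF m t + Suf m (t + 1) := by
  rw [Suf, Suf, show Finset.Icc t (n - 1) = insert t (Finset.Icc (t + 1) (n - 1)) by
    ext x
    simp only [Finset.mem_Icc, Finset.mem_insert]
    omega]
  rw [Finset.sum_insert (by simp only [Finset.mem_Icc]; omega)]

lemma Suf_zero (m : Fin (n + 1) → ℕ) {t : ℕ} (ht : n - 1 < t) : Suf m t = 0 := by
  rw [Suf, Finset.Icc_eq_empty (by omega), Finset.sum_empty]

lemma gseq_step (γ : CPerm r n) (m : Fin (n + 1) → ℕ) {j : ℕ} (hj : j + 1 < n) :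
    gseq d γ m j + fstatN γ (j + 1)
      = gseq d γ m (j + 1) + fstatN γ j + r * mmF m (j + 1) := by
  rw [gseq, gseq, Suf_step m (t := j + 1) (by omega)]
  ring

lemma gseq_antitone_step (γ : CPerm r n) (m : Fin (n + 1) → ℕ) {j : ℕ} (hj : j + 1 < n) :
    gseq d γ m (j + 1) + (if isDesc γ j then 1 else 0) ≤ gseq d γ m j := by
  have h1 := gseq_step (d := d) γ m hj
  have h2 := fstatN_antitone_step γ hj
  omega

lemma gseq_antitone (γ : CPerm r n) (m : Fin (n + 1) → ℕ) {i j : ℕ} (hij : i ≤ j)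
    (hj : j < n) : gseq d γ m j ≤ gseq d γ m i := by
  induction j, hij using Nat.le_induction with
  | base => exact le_rfl
  | succ j hij ih =>
      have h1 := gseq_antitone_step (d := d) γ m (j := j) hj
      have h2 := ih (by omega)
      omega

lemma gseq_tie_step (γ : CPerm r n) (m : Fin (n + 1) → ℕ) {j : ℕ} (hj : j + 1 < n)
    (htie : gseq d γ m j = gseq d γ m (j + 1)) :
    γ.2 ⟨j, Nat.lt_of_succ_lt hj⟩ < γ.2 ⟨j + 1, hj⟩ := by
  have h1 := gseq_step (d := d) γ m hj
  have h2 := fstatN_antitone_step γ hj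
  have hnd : ¬ isDesc γ j := by
    intro h
    rw [if_pos h] at h2
    omega
  have hfeq : fstatN γ j = fstatN γ (j + 1) := by
    rw [if_neg hnd] at h2
    omega
  have hceq : colN γ j = colN γ (j + 1) := by
    have h3 := fstatN_step γ hj
    rw [if_neg hnd, mul_zero, add_zero] at h3
    have h4 := dstat_step γ j
    rw [if_neg hnd, add_zero] at h4
    rw [fstatN, fstatN, h4] at hfeq
    omega
  have hcfin : γ.1 ⟨j, Nat.lt_of_succ_lt hj⟩ = γ.1 ⟨j + 1, hj⟩ := by
    rw [colN, colN, dif_pos hj, dif_pos (Nat.lt_of_succ_lt hj)] at hceq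
    exact Fin.ext hceq
  have hnlt : ¬ (γ.2 ⟨j + 1, hj⟩ < γ.2 ⟨j, Nat.lt_of_succ_lt hj⟩) := by
    intro hcon
    exact hnd ⟨hj, Or.inr ⟨hcfin, hcon⟩⟩
  have hne : γ.2 ⟨j, Nat.lt_of_succ_lt hj⟩ ≠ γ.2 ⟨j + 1, hj⟩ := by
    intro hcon
    have := γ.2.injective hcon
    have : j = j + 1 := congrArg Fin.val this
    omega
  exact lt_of_le_of_ne (le_of_not_gt hnlt) hne

lemma gseq_tie_chain (γ : CPerm r n) (m : Fin (n + 1) → ℕ) {i j : ℕ} (hij : i < j) :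
    ∀ (hj : j < n), gseq d γ m i = gseq d γ m j →
      γ.2 ⟨i, lt_trans hij hj⟩ < γ.2 ⟨j, hj⟩ := by
  induction j, hij using Nat.le_induction with
  | base =>
      intro hj htie
      exact gseq_tie_step γ m hj htie
  | succ j hij ih =>
      intro hj htie
      have hjn : j < n := by omega
      have h1 : gseq d γ m j ≤ gseq d γ m i := gseq_antitone γ m (le_of_lt hij) hjn
      have h2 := gseq_antitone_step (d := d) γ m (j := j) hj
      have e1 : gseq d γ m i = gseq d γ m j := by
        have : (0:ℕ) ≤ if isDesc γ j then 1 else 0 := Nat.zero_le _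
        omega
      have e2 : gseq d γ m j = gseq d γ m (j + 1) := by omega
      exact lt_trans (ih hjn e1) (gseq_tie_step γ m hj e2)

lemma Phi_apply_perm (γ : CPerm r n) (m : Fin (n + 1) → ℕ) (t : Fin n) :
    Phi d γ m (γ.2 t) = gseq d γ m (t : ℕ) := by
  rw [Phi, ← Equiv.Perm.mul_apply, inv_mul_cancel, Equiv.Perm.one_apply]

lemma sort_Phi (γ : CPerm r n) (m : Fin (n + 1) → ℕ) :
    γ.2 = Tuple.sort (fun i => OrderDual.toDual (Phi d γ m i)) := by
  rw [Tuple.eq_sort_iff]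
  constructor
  · intro i j hij
    simp only [Function.comp_apply]
    rw [OrderDual.toDual_le_toDual, Phi_apply_perm, Phi_apply_perm]
    exact gseq_antitone γ m hij j.isLt
  · intro i j hij heq
    have heq2 : Phi d γ m (γ.2 i) = Phi d γ m (γ.2 j) := heq
    rw [Phi_apply_perm, Phi_apply_perm] at heq2
    have heq' : gseq d γ m (i : ℕ) = gseq d γ m (j : ℕ) := heq2
    exact gseq_tie_chain γ m (i := (i:ℕ)) (j := (j:ℕ)) hij j.isLt heq'

lemma gseq_decomp (γ : CPerm r n) (m : Fin (n + 1) → ℕ) (j : ℕ) :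
    gseq d γ m j = colN γ j + r * (dstat γ (j + 1) + Suf m (j + 1)) + d * mmF m n := by
  rw [gseq, fstatN]
  ring

lemma gseq_last (hn : 0 < n) (γ : CPerm r n) (m : Fin (n + 1) → ℕ) :
    gseq d γ m (n - 1) = colN γ (n - 1) + d * mmF m n := by
  rw [gseq_decomp, dstat_eq_zero γ (by omega), Suf_zero m (by omega)]
  ring

lemma unique_mul_add {D c c' x x' : ℕ} (hc : c < D) (hc' : c' < D)
    (h : c + D * x = c' + D * x') : c = c' ∧ x = x' := by
  have hD : 0 < D := by omega
  have hx : (c + D * x) / D = x := by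
    rw [Nat.add_mul_div_left _ _ hD, Nat.div_eq_of_lt hc, zero_add]
  have hx' : (c' + D * x') / D = x' := by
    rw [Nat.add_mul_div_left _ _ hD, Nat.div_eq_of_lt hc', zero_add]
  have hmx : (c + D * x) % D = c := by
    rw [Nat.add_mul_mod_self_left, Nat.mod_eq_of_lt hc]
  have hmx' : (c' + D * x') % D = c' := by
    rw [Nat.add_mul_mod_self_left, Nat.mod_eq_of_lt hc']
  constructor
  · rw [← hmx, ← hmx', h]
  · rw [← hx, ← hx', h]

lemma colN_coe (γ : CPerm r n) (i : Fin n) : colN γ (i : ℕ) = (γ.1 i : ℕ) := by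
  rw [colN, dif_pos i.isLt]

lemma mem_GammaD_iff {hn : 0 < n} {γ : CPerm r n} :
    γ ∈ GammaD r d n hn ↔ colN γ (n - 1) < d := by
  rw [GammaD, Finset.mem_filter]
  simp

lemma gseq_zero (γ : CPerm r n) (m : Fin (n + 1) → ℕ) :
    gseq d γ m 0 = fstatN γ 0 + r * Suf m 1 + d * mmF m n := by
  rw [gseq]

lemma Phi_inj (hr : 0 < r) (hd : 0 < d) (hn : 0 < n) {k a : ℕ}
    {γ γ' : CPerm r n} {m m' : Fin (n + 1) → ℕ}
    (hγ : γ ∈ GammaD r d n hn) (hγ' : γ' ∈ GammaD r d n hn)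
    (hm : m ∈ Mset d γ hn k a) (hm' : m' ∈ Mset d γ' hn k a)
    (heq : Phi d γ m = Phi d γ' m') : γ = γ' ∧ m = m' := by
  have hσ : γ.2 = γ'.2 := by
    rw [sort_Phi (d := d) γ m, heq, ← sort_Phi]
  have hg : ∀ j, j < n → gseq d γ m j = gseq d γ' m' j := by
    intro j hj
    have h1 : gseq d γ m j = Phi d γ m (γ.2 ⟨j, hj⟩) := (Phi_apply_perm γ m ⟨j, hj⟩).symm
    have h2 : gseq d γ' m' j = Phi d γ' m' (γ'.2 ⟨j, hj⟩) := (Phi_apply_perm γ' m' ⟨j, hj⟩).symm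
    rw [h1, h2, heq, hσ]
  have hcolt : colN γ (n - 1) < d := mem_GammaD_iff.mp hγ
  have hcolt' : colN γ' (n - 1) < d := mem_GammaD_iff.mp hγ'
  have hlast := hg (n - 1) (by omega)
  rw [gseq_last hn γ m, gseq_last hn γ' m'] at hlast
  obtain ⟨hclast, hmn⟩ := unique_mul_add hcolt hcolt' hlast
  have hcol : ∀ j, j < n → colN γ j = colN γ' j ∧
      dstat γ (j + 1) + Suf m (j + 1) = dstat γ' (j + 1) + Suf m' (j + 1) := by
    intro j hj
    have hgj := hg j hj
    rw [gseq_decomp, gseq_decomp, hmn] at hgj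
    have h : colN γ j + r * (dstat γ (j + 1) + Suf m (j + 1))
        = colN γ' j + r * (dstat γ' (j + 1) + Suf m' (j + 1)) := by omega
    exact unique_mul_add (colN_lt γ hj) (colN_lt γ' hj) h
  have hc : γ.1 = γ'.1 := by
    funext i
    apply Fin.ext
    have := (hcol (i : ℕ) i.isLt).1
    rwa [colN_coe, colN_coe] at this
  have hγeq : γ = γ' := Prod.ext hc hσ
  subst hγeq
  refine ⟨rfl, ?_⟩
  have hSuf : ∀ t, 1 ≤ t → t ≤ n → Suf m t = Suf m' t := by
    intro t h1 h2
    have h3 := (hcol (t - 1) (by omega)).2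
    rw [show t - 1 + 1 = t by omega] at h3
    omega
  have hmid : ∀ j, 1 ≤ j → j ≤ n - 1 → mmF m j = mmF m' j := by
    intro j h1 h2
    have e1 := Suf_step m (t := j) (by omega)
    have e2 := Suf_step m' (t := j) (by omega)
    have e3 := hSuf j h1 (by omega)
    have e4 := hSuf (j + 1) (by omega) (by omega)
    omega
  have hK := (Finset.mem_filter.mp hm).2.1
  have hK' := (Finset.mem_filter.mp hm').2.1
  rw [sum_wN_split hn] at hK hK'
  have hfd := fdes_eq γ hn
  have hz : gseq d γ m 0 + mmF m 0 = k := by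
    rw [gseq_zero]
    omega
  have hz' : gseq d γ m' 0 + mmF m' 0 = k := by
    rw [gseq_zero]
    omega
  have hg0 := hg 0 hn
  have hm0 : mmF m 0 = mmF m' 0 := by omega
  funext i
  have hi : (i : ℕ) < n + 1 := i.isLt
  rw [← mmF_coe m i, ← mmF_coe m' i]
  rcases Nat.eq_zero_or_pos (i : ℕ) with h0 | h0
  · rw [h0, hm0]
  · rcases eq_or_lt_of_le (show (i:ℕ) ≤ n by omega) with hi2 | hi2
    · rw [hi2, hmn]
    · exact hmid (i : ℕ) h0 (by omega)

lemma Suf_total (hn : 0 < n) (m : Fin (n + 1) → ℕ) :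
    ∑ j ∈ Finset.range n, Suf m (j + 1) = ∑ i ∈ Finset.Icc 1 (n - 1), i * mmF m i := by
  have h1 : ∀ j ∈ Finset.range n, Suf m (j + 1)
      = ∑ i ∈ Finset.Icc 1 (n - 1), if j + 1 ≤ i then mmF m i else 0 := by
    intro j _
    rw [Suf, ← Finset.sum_filter]
    congr 1
    ext x
    simp only [Finset.mem_Icc, Finset.mem_filter]
    omega
  rw [Finset.sum_congr rfl h1, Finset.sum_comm]
  apply Finset.sum_congr rfl
  intro i hi
  rw [Finset.mem_Icc] at hi
  rw [← Finset.sum_filter]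
  have h2 : (Finset.range n).filter (fun j => j + 1 ≤ i) = Finset.range i := by
    ext x
    simp only [Finset.mem_filter, Finset.mem_range]
    omega
  rw [h2, Finset.sum_const, Finset.card_range, smul_eq_mul]

lemma gseq_sum (hn : 0 < n) (γ : CPerm r n) (m : Fin (n + 1) → ℕ) :
    ∑ j ∈ Finset.range n, gseq d γ m j
      = fmaj γ + (r * (∑ i ∈ Finset.Icc 1 (n - 1), i * mmF m i) + n * (d * mmF m n)) := by
  unfold gseq
  rw [Finset.sum_add_distrib, Finset.sum_add_distrib, ← fmaj_eq_sum, ← Finset.mul_sum,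
    Suf_total hn, Finset.sum_const, Finset.card_range, smul_eq_mul]
  ring

lemma Phi_sum (γ : CPerm r n) (m : Fin (n + 1) → ℕ) :
    ∑ i, Phi d γ m i = ∑ j ∈ Finset.range n, gseq d γ m j := by
  rw [← Fin.sum_univ_eq_sum_range (fun j => gseq d γ m j)]
  rw [← Equiv.sum_comp γ.2⁻¹ (fun t : Fin n => gseq d γ m (t : ℕ))]
  rfl

lemma Phi_mem (hn : 0 < n) {k a : ℕ} (γ : CPerm r n) (m : Fin (n + 1) → ℕ)
    (hm : m ∈ Mset d γ hn k a) : Phi d γ m ∈ Ffin n k a := by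
  obtain ⟨-, hK, hA⟩ := Finset.mem_filter.mp hm
  rw [sum_wN_split hn] at hK
  rw [sum_vN_split hn] at hA
  rw [Ffin, Finset.mem_filter]
  constructor
  · rw [Fintype.mem_piFinset]
    intro i
    rw [Finset.mem_range]
    have h1 : gseq d γ m ((γ.2⁻¹ i : Fin n) : ℕ) ≤ gseq d γ m 0 :=
      gseq_antitone γ m (Nat.zero_le _) (γ.2⁻¹ i).isLt
    have h2 : gseq d γ m 0 + mmF m 0 = k := by
      rw [gseq_zero]
      have := fdes_eq γ hn
      omega
    have : Phi d γ m i = gseq d γ m ((γ.2⁻¹ i : Fin n) : ℕ) := rfl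
    omega
  · rw [Phi_sum, gseq_sum hn]
    omega

lemma nat_sub_anti {X Y D1 D2 p : ℕ} (e1 : D2 = D1 + p) (e2 : X + p ≤ Y) (e3 : D1 ≤ X) :
    X - D1 ≤ Y - D2 := by omega

lemma Phi_surj (hr : 0 < r) (hd : 0 < d) (hdr : d ≤ r) (hn : 0 < n) {k a : ℕ}
    (f : Fin n → ℕ) (hf : f ∈ Ffin n k a) :
    ∃ γ, γ ∈ GammaD r d n hn ∧ ∃ m ∈ Mset d γ hn k a, Phi d γ m = f := by
  classical
  obtain ⟨hpi, hsum⟩ := Finset.mem_filter.mp hf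
  rw [Fintype.mem_piFinset] at hpi
  have hb : ∀ i, f i ≤ k := by
    intro i
    have := hpi i
    rw [Finset.mem_range] at this
    omega
  obtain ⟨σ, hσ⟩ : ∃ σ : Equiv.Perm (Fin n),
      σ = Tuple.sort (fun i => OrderDual.toDual (f i)) := ⟨_, rfl⟩
  obtain ⟨g, hgdef⟩ : ∃ g : ℕ → ℕ,
      g = fun j => if h : j < n then f (σ ⟨j, h⟩) else 0 := ⟨_, rfl⟩
  obtain ⟨mn, hmn⟩ : ∃ mn, mn = g (n - 1) / d := ⟨_, rfl⟩
  obtain ⟨γf, hγf⟩ : ∃ γf : CPerm r n,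
      γf = (fun i : Fin n => (⟨(g (i : ℕ) - d * mn) % r, Nat.mod_lt _ hr⟩ : Fin r), σ) :=
    ⟨_, rfl⟩
  have hγ1 : ∀ (j : ℕ) (hj : j < n), (γf.1 ⟨j, hj⟩ : ℕ) = (g j - d * mn) % r := by
    intro j hj
    rw [hγf]
  have hγ2 : γf.2 = σ := by rw [hγf]
  have hgf : ∀ (j : ℕ) (hj : j < n), g j = f (σ ⟨j, hj⟩) := by
    intro j hj
    rw [hgdef]
    show (if h : j < n then f (σ ⟨j, h⟩) else 0) = f (σ ⟨j, hj⟩)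
    rw [dif_pos hj]
  have hganti : ∀ i j : ℕ, i ≤ j → j < n → g j ≤ g i := by
    intro i j hij hj
    have hi : i < n := lt_of_le_of_lt hij hj
    rw [hgf j hj, hgf i hi]
    have hmono := Tuple.monotone_sort (fun i => OrderDual.toDual (f i))
    have h2 := hmono (a := ⟨i, hi⟩) (b := ⟨j, hj⟩) hij
    rw [← hσ] at h2
    exact h2
  have htie : ∀ (j : ℕ) (hj : j + 1 < n), g j = g (j + 1) →
      σ ⟨j, Nat.lt_of_succ_lt hj⟩ < σ ⟨j + 1, hj⟩ := by
    intro j hj heq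
    have hchar := (Tuple.eq_sort_iff.mp hσ).2
    apply hchar ⟨j, Nat.lt_of_succ_lt hj⟩ ⟨j + 1, hj⟩ (by rw [Fin.mk_lt_mk]; omega)
    rw [hgf j (Nat.lt_of_succ_lt hj), hgf (j + 1) hj] at heq
    exact congrArg OrderDual.toDual heq
  have hcolN : ∀ (j : ℕ) (hj : j < n), colN γf j = (g j - d * mn) % r := by
    intro j hj
    rw [colN, dif_pos hj, hγ1]
  -- basic bounds
  have hmnle : d * mn ≤ g (n - 1) := by
    rw [hmn, mul_comm]
    exact Nat.div_mul_le_self _ _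
  have hge : ∀ j, j < n → d * mn ≤ g j := by
    intro j hj
    exact le_trans hmnle (hganti j (n - 1) (by omega) (by omega))
  have hlastlt : g (n - 1) - d * mn < d := by
    have h1 := Nat.mod_add_div (g (n - 1)) d
    have h2 : g (n - 1) % d < d := Nat.mod_lt _ hd
    rw [hmn]
    omega
  have hγmem : γf ∈ GammaD r d n hn := by
    rw [mem_GammaD_iff, hcolN (n - 1) (by omega), Nat.mod_eq_of_lt (by omega)]
    omega
  have hqc : ∀ j, j < n → r * ((g j - d * mn) / r) + colN γf j = g j - d * mn := by
    intro j hj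
    rw [hcolN j hj]
    exact Nat.div_add_mod _ _
  have hqlast : (g (n - 1) - d * mn) / r = 0 := Nat.div_eq_of_lt (by omega)
  -- descent step inequality
  have hqstep : ∀ j, j + 1 < n →
      (g (j + 1) - d * mn) / r + (if isDesc γf j then 1 else 0) ≤ (g j - d * mn) / r := by
    intro j hj
    have hjn : j < n := Nat.lt_of_succ_lt hj
    have hA := hqc j hjn
    have hB := hqc (j + 1) hj
    have hABle : g (j + 1) ≤ g j := hganti j (j + 1) (by omega) hj
    have hgej := hge j hjn
    have hgej1 := hge (j + 1) hj
    by_cases hdesc : isDesc γf j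
    · rw [if_pos hdesc]
      obtain ⟨h1, hor⟩ := hdesc
      rcases hor with hlt | ⟨heqc, hpl⟩
      · have hcl : colN γf j < colN γf (j + 1) := by
          rw [colN, colN, dif_pos hj, dif_pos hjn]
          exact hlt
        have hmul : r * ((g (j + 1) - d * mn) / r) < r * ((g j - d * mn) / r) := by omega
        have := Nat.lt_of_mul_lt_mul_left hmul
        omega
      · have hne : g j ≠ g (j + 1) := by
          intro hcon
          have hlt2 := htie j hj hcon
          rw [← hγ2] at hlt2
          exact absurd hpl (lt_asymm hlt2)
        have hceq : colN γf j = colN γf (j + 1) := by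
          rw [colN, colN, dif_pos hj, dif_pos hjn]
          exact congrArg Fin.val heqc
        have hmul : r * ((g (j + 1) - d * mn) / r) < r * ((g j - d * mn) / r) := by omega
        have := Nat.lt_of_mul_lt_mul_left hmul
        omega
    · rw [if_neg hdesc]
      have hcge : colN γf (j + 1) ≤ colN γf j := not_isDesc_colN_ge hj hdesc
      have hclt : colN γf j < r := colN_lt γf hjn
      have hmul : r * ((g (j + 1) - d * mn) / r) < r * ((g j - d * mn) / r + 1) := by
        rw [Nat.mul_succ]
        omega
      have := Nat.lt_of_mul_lt_mul_left hmul
      omega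
  -- number of descents below the quotients
  have hqd : ∀ t j, j < n → n - 1 - j = t → dstat γf (j + 1) ≤ (g j - d * mn) / r := by
    intro t
    induction t with
    | zero =>
        intro j hj ht
        have hjeq : j = n - 1 := by omega
        subst hjeq
        rw [dstat_eq_zero γf (by omega)]
        exact Nat.zero_le _
    | succ t ih =>
        intro j hj ht
        have hj1 : j + 1 < n := by omega
        have h1 := dstat_step γf j
        have h2 : dstat γf (j + 2) ≤ (g (j + 1) - d * mn) / r := ih (j + 1) (by omega) (by omega)
        have h3 := hqstep j hj1
        omega
  have hqd2 : ∀ j, j < n → dstat γf (j + 1) ≤ (g j - d * mn) / r :=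
    fun j hj => hqd (n - 1 - j) j hj rfl
  -- the multiplicity function
  obtain ⟨mfun, hmm0, hmmn, hmmid⟩ : ∃ mfun : Fin (n + 1) → ℕ,
      mmF mfun 0 = k - g 0 ∧ mmF mfun n = mn ∧
      ∀ j, 1 ≤ j → j ≤ n - 1 → mmF mfun j =
        ((g (j - 1) - d * mn) / r - dstat γf j) - ((g j - d * mn) / r - dstat γf (j + 1)) := by
    refine ⟨fun i => if (i : ℕ) = 0 then k - g 0 else if (i : ℕ) = n then mn else
      ((g ((i : ℕ) - 1) - d * mn) / r - dstat γf (i : ℕ))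
        - ((g (i : ℕ) - d * mn) / r - dstat γf ((i : ℕ) + 1)), ?_, ?_, ?_⟩
    · rw [mmF, dif_pos (show (0 : ℕ) < n + 1 by omega)]
      show (if (0 : ℕ) = 0 then k - g 0 else _) = k - g 0
      rw [if_pos rfl]
    · rw [mmF, dif_pos (show n < n + 1 by omega)]
      show (if n = 0 then k - g 0 else if n = n then mn else _) = mn
      rw [if_neg (by omega), if_pos rfl]
    · intro j h1 h2
      rw [mmF, dif_pos (show j < n + 1 by omega)]
      show (if j = 0 then k - g 0 else if j = n then mn else
        ((g (j - 1) - d * mn) / r - dstat γf j)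
          - ((g j - d * mn) / r - dstat γf (j + 1))) = _
      rw [if_neg (by omega), if_neg (by omega)]
  -- monotonicity of the M-sequence
  have hManti : ∀ t, 1 ≤ t → t ≤ n - 1 →
      ((g t - d * mn) / r - dstat γf (t + 1)) ≤ ((g (t - 1) - d * mn) / r - dstat γf t) := by
    intro t h1 h2
    have e1 := dstat_step γf (t - 1)
    rw [show t - 1 + 1 = t by omega, show t - 1 + 2 = t + 1 by omega] at e1
    have e2 := hqstep (t - 1) (by omega)
    rw [show t - 1 + 1 = t by omega] at e2
    have e3 := hqd2 t (by omega)
    exact nat_sub_anti e1 e2 e3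
  -- suffix sums
  have hSuf : ∀ s t, 1 ≤ t → t ≤ n → n - t = s →
      Suf mfun t = (g (t - 1) - d * mn) / r - dstat γf t := by
    intro s
    induction s with
    | zero =>
        intro t h1 h2 h3
        have : t = n := by omega
        subst this
        rw [Suf_zero mfun (by omega), dstat_eq_zero γf (by omega), hqlast]
    | succ s ih =>
        intro t h1 h2 h3
        have h4 : t ≤ n - 1 := by omega
        rw [Suf_step mfun h4, hmmid t h1 h4, ih (t + 1) (by omega) (by omega) (by omega)]
        have h5 := hManti t h1 h4
        rw [show t + 1 - 1 = t by omega]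
        exact Nat.sub_add_cancel h5
  have hSuf2 : ∀ t, 1 ≤ t → t ≤ n → Suf mfun t = (g (t - 1) - d * mn) / r - dstat γf t :=
    fun t h1 h2 => hSuf (n - t) t h1 h2 rfl
  -- the sequence matches
  have hgseq : ∀ j, j < n → gseq d γf mfun j = g j := by
    intro j hj
    rw [gseq_decomp]
    have hSufj := hSuf2 (j + 1) (by omega) (by omega)
    rw [show j + 1 - 1 = j by omega] at hSufj
    rw [hSufj, hmmn]
    have h1 := hqd2 j hj
    have h2 := hqc j hj
    have h3 := hge j hj
    have h4 : dstat γf (j + 1) + ((g j - d * mn) / r - dstat γf (j + 1))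
        = (g j - d * mn) / r := by omega
    rw [h4]
    omega
  -- conclusion
  have hg0le : g 0 ≤ k := by
    rw [hgf 0 hn]
    exact hb _
  have hKraw : fdes γf hn + ∑ i ∈ Finset.range (n + 1), wN r d n i * mmF mfun i = k := by
    rw [sum_wN_split hn]
    have e0 : gseq d γf mfun 0 = g 0 := hgseq 0 hn
    rw [gseq_zero] at e0
    have efd := fdes_eq γf hn
    omega
  have hAraw : fmaj γf + ∑ i ∈ Finset.range (n + 1), vN r d n i * mmF mfun i = a := by
    rw [sum_vN_split hn]
    have hgsum := gseq_sum (d := d) hn γf mfun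
    have e1 : ∑ j ∈ Finset.range n, gseq d γf mfun j = ∑ j ∈ Finset.range n, g j :=
      Finset.sum_congr rfl fun j hj => hgseq j (Finset.mem_range.mp hj)
    have e2 : ∑ j ∈ Finset.range n, g j = a := by
      rw [← Fin.sum_univ_eq_sum_range (fun j => g j)]
      have e3 : ∀ i : Fin n, g (i : ℕ) = f (γf.2 i) := by
        intro i
        rw [hgf (i : ℕ) i.isLt, hγ2]
      rw [Finset.sum_congr rfl fun i _ => e3 i, ← hsum]
      exact Equiv.sum_comp γf.2 f
    omega
  refine ⟨γf, hγmem, mfun, ?_, ?_⟩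
  · rw [Mset, Finset.mem_filter]
    refine ⟨?_, hKraw, hAraw⟩
    rw [Fintype.mem_piFinset]
    intro i
    rw [Finset.mem_range]
    have hmem : (i : ℕ) ∈ Finset.range (n + 1) := Finset.mem_range.mpr i.isLt
    have hle : wN r d n (i : ℕ) * mmF mfun (i : ℕ)
        ≤ ∑ j ∈ Finset.range (n + 1), wN r d n j * mmF mfun j :=
      Finset.single_le_sum (f := fun j => wN r d n j * mmF mfun j)
        (fun j _ => Nat.zero_le _) hmem
    have hpos := wN_pos hr hd n (i : ℕ)
    have hle2 : mmF mfun (i : ℕ) ≤ wN r d n (i : ℕ) * mmF mfun (i : ℕ) :=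
      Nat.le_mul_of_pos_left _ hpos
    rw [← mmF_coe mfun i]
    omega
  · funext i
    have h1 : Phi d γf mfun i = gseq d γf mfun ((γf.2⁻¹ i : Fin n) : ℕ) := rfl
    rw [h1, hgseq _ (γf.2⁻¹ i).isLt, hgf _ (γf.2⁻¹ i).isLt]
    have h2 : σ ⟨((γf.2⁻¹ i : Fin n) : ℕ), (γf.2⁻¹ i).isLt⟩ = σ (γf.2⁻¹ i) := by
      congr 1
    rw [h2, ← hγ2, ← Equiv.Perm.mul_apply, mul_inv_cancel, Equiv.Perm.one_apply]

theorem count_main (hr : 0 < r) (hd : 0 < d) (hdr : d ≤ r) (hn : 0 < n) (k a : ℕ) :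
    (Ffin n k a).card = ∑ γ ∈ GammaD r d n hn, (Mset d γ hn k a).card := by
  classical
  rw [← Finset.card_sigma]
  symm
  apply Finset.card_bij (fun (x : Σ _ : CPerm r n, Fin (n + 1) → ℕ) (_ : x ∈
    (GammaD r d n hn).sigma fun γ => Mset d γ hn k a) => Phi d x.1 x.2)
  · intro x hx
    obtain ⟨h1, h2⟩ := Finset.mem_sigma.mp hx
    exact Phi_mem hn x.1 x.2 h2
  · intro x hx y hy h
    obtain ⟨hx1, hx2⟩ := Finset.mem_sigma.mp hx
    obtain ⟨hy1, hy2⟩ := Finset.mem_sigma.mp hy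
    obtain ⟨h1, h2⟩ := Phi_inj hr hd hn hx1 hy1 hx2 hy2 h
    exact Sigma.ext h1 (heq_of_eq h2)
  · intro f hf
    obtain ⟨γ, hγ, m, hm, hphi⟩ := Phi_surj hr hd hdr hn f hf
    exact ⟨⟨γ, m⟩, Finset.mem_sigma.mpr ⟨hγ, hm⟩, hphi⟩

end Bij

section Assemble
open ColoredPerm

variable {r d n : ℕ}

lemma coeff_carlitzLHS (n : ℕ) (μ : Fin 2 →₀ ℕ) :
    coeff μ (carlitzLHS n) = ((Ffin n (μ 1) (μ 0)).card : ℂ) := by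
  classical
  have h0 : coeff μ (carlitzLHS n)
      = ((∑ j ∈ Finset.range (μ 1 + 1), (Polynomial.X : Polynomial ℂ) ^ j) ^ n).coeff (μ 0) :=
    rfl
  rw [h0]
  have h1 : (∑ j ∈ Finset.range (μ 1 + 1), (Polynomial.X : Polynomial ℂ) ^ j) ^ n
      = ∑ m ∈ Fintype.piFinset (fun _ : Fin n => Finset.range (μ 1 + 1)),
          (Polynomial.X : Polynomial ℂ) ^ (∑ i, m i) := by
    rw [show (∑ j ∈ Finset.range (μ 1 + 1), (Polynomial.X : Polynomial ℂ) ^ j) ^ n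
        = ∏ _i : Fin n, (∑ j ∈ Finset.range (μ 1 + 1), (Polynomial.X : Polynomial ℂ) ^ j) by
      rw [Finset.prod_const, Finset.card_univ, Fintype.card_fin]]
    rw [Finset.prod_univ_sum]
    apply Finset.sum_congr rfl
    intro m _
    rw [Finset.prod_pow_eq_pow_sum]
  rw [h1, Polynomial.finset_sum_coeff]
  have h2 : ∀ m ∈ Fintype.piFinset (fun _ : Fin n => Finset.range (μ 1 + 1)),
      ((Polynomial.X : Polynomial ℂ) ^ (∑ i, m i)).coeff (μ 0)
        = if ∑ i, m i = μ 0 then (1 : ℂ) else 0 := by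
    intro m _
    rw [Polynomial.coeff_X_pow]
    exact if_congr eq_comm rfl rfl
  rw [Finset.sum_congr rfl h2, sum_indicator]
  rfl

lemma per_gamma (hr : 0 < r) (hd : 0 < d) (hn : 0 < n) (μ : Fin 2 →₀ ℕ) (γ : CPerm r n) :
    coeff μ (monomial (e2 (fmaj γ) (fdes γ hn)) 1 * Gser r d n)
      = ((Mset d γ hn (μ 1) (μ 0)).card : ℂ) := by
  classical
  rw [coeff_monomial_mul]
  by_cases hle : e2 (fmaj γ) (fdes γ hn) ≤ μ
  · obtain ⟨hle0, hle1⟩ := e2_le_iff.mp hle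
    rw [if_pos hle, one_mul,
      coeff_Gser hr hd _ (μ 1) (by rw [Finsupp.tsub_apply, e2_apply1]; omega)]
    have e1 : (μ - e2 (fmaj γ) (fdes γ hn)) 1 = μ 1 - fdes γ hn := by
      rw [Finsupp.tsub_apply, e2_apply1]
    have e0 : (μ - e2 (fmaj γ) (fdes γ hn)) 0 = μ 0 - fmaj γ := by
      rw [Finsupp.tsub_apply, e2_apply0]
    rw [e1, e0]
    congr 1
    rw [Mcnt, Mset]
    congr 1
    apply Finset.filter_congr
    intro m _
    constructor
    · rintro ⟨c1, c2⟩
      constructor <;> omega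
    · rintro ⟨c1, c2⟩
      constructor <;> omega
  · rw [if_neg hle]
    have hemp : Mset d γ hn (μ 1) (μ 0) = ∅ := by
      rw [Finset.eq_empty_iff_forall_notMem]
      intro m hm
      obtain ⟨-, h1, h2⟩ := Finset.mem_filter.mp hm
      apply hle
      rw [e2_le_iff]
      omega
    rw [hemp]
    simp

lemma carlitz_eq (hr : 0 < r) (hd : 0 < d) (hdr : d ≤ r) (hn : 0 < n) :
    carlitzLHS n
      = (∑ γ ∈ GammaD r d n hn, monomial (e2 (fmaj γ) (fdes γ hn)) 1) * Gser r d n := by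
  ext μ
  rw [Finset.sum_mul, map_sum, coeff_carlitzLHS,
    Finset.sum_congr rfl (fun γ _ => per_gamma hr hd hn μ γ),
    count_main hr hd hdr hn (μ 1) (μ 0)]
  push_cast
  rfl

end Assemble


end CarlitzAux
open ColoredPerm MvPowerSeries in
/-- **Carlitz identity for `G(r,p,n)`.** With `q = X 0`, `t = X 1`, `d = r/p`,
and statistics on `G(r,p,n)` transported to `Γ(r,p,n)`:
`Σ_{k≥0} [k+1]_q^n t^k · (1−t)·Π_{i=1}^{n-1}(1−t^r q^{ir})·(1−t^d q^{nd})
  = Σ_{h ∈ G(r,p,n)} t^{fdes h} q^{fmaj h}`. -/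
theorem carlitz_grpn (r p n : ℕ) (hr : 0 < r) (hp : 0 < p) (hn : 0 < n) (hpr : p ∣ r) :
    carlitzLHS n * (1 - X 1) *
        (∏ i ∈ Finset.Icc 1 (n - 1), (1 - X 1 ^ r * X 0 ^ (i * r))) *
        (1 - X 1 ^ (r / p) * X 0 ^ (n * (r / p))) =
      ∑ γ ∈ Gamma r p n hn, (X 1 : MvPowerSeries (Fin 2) ℂ) ^ fdes γ hn * X 0 ^ fmaj γ := by
  classical
  open CarlitzAux in
  have hd : 0 < r / p := Nat.div_pos (Nat.le_of_dvd hr hpr) hp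
  have hdr : r / p ≤ r := Nat.div_le_self r p
  have hA : (∑ γ ∈ Gamma r p n hn, (X 1 : MvPowerSeries (Fin 2) ℂ) ^ fdes γ hn * X 0 ^ fmaj γ)
      = ∑ γ ∈ CarlitzAux.GammaD r (r / p) n hn,
          monomial (CarlitzAux.e2 (fmaj γ) (fdes γ hn)) 1 := by
    rw [CarlitzAux.Gamma_eq_GammaD]
    exact Finset.sum_congr rfl fun γ _ => CarlitzAux.X_pow_mul_X_pow_eq _ _
  have hD : ((1 : MvPowerSeries (Fin 2) ℂ) - X 1) *
        (∏ i ∈ Finset.Icc 1 (n - 1), (1 - X 1 ^ r * X 0 ^ (i * r))) *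
        (1 - X 1 ^ (r / p) * X 0 ^ (n * (r / p)))
      = ∏ i ∈ Finset.range (n + 1),
          (1 - X 1 ^ CarlitzAux.wN r (r / p) n i * X 0 ^ CarlitzAux.vN r (r / p) n i) := by
    rw [CarlitzAux.range_succ_split hn,
      Finset.prod_insert (CarlitzAux.zero_not_mem_insert hn),
      Finset.prod_insert CarlitzAux.n_not_mem_Icc]
    have h0 : (1 : MvPowerSeries (Fin 2) ℂ)
        - X 1 ^ CarlitzAux.wN r (r / p) n 0 * X 0 ^ CarlitzAux.vN r (r / p) n 0
        = 1 - X 1 := by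
      rw [show CarlitzAux.wN r (r / p) n 0 = 1 by simp [CarlitzAux.wN],
        show CarlitzAux.vN r (r / p) n 0 = 0 by simp [CarlitzAux.vN],
        pow_one, pow_zero, mul_one]
    have hgn : (1 : MvPowerSeries (Fin 2) ℂ)
        - X 1 ^ CarlitzAux.wN r (r / p) n n * X 0 ^ CarlitzAux.vN r (r / p) n n
        = 1 - X 1 ^ (r / p) * X 0 ^ (n * (r / p)) := by
      rw [show CarlitzAux.wN r (r / p) n n = r / p by
          rw [CarlitzAux.wN]; rw [if_neg (by omega), if_pos rfl],
        show CarlitzAux.vN r (r / p) n n = n * (r / p) by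
          rw [CarlitzAux.vN]; rw [if_neg (by omega), if_pos rfl]]
    have hmid : ∀ i ∈ Finset.Icc 1 (n - 1),
        (1 : MvPowerSeries (Fin 2) ℂ)
          - X 1 ^ CarlitzAux.wN r (r / p) n i * X 0 ^ CarlitzAux.vN r (r / p) n i
          = 1 - X 1 ^ r * X 0 ^ (i * r) := by
      intro i hi
      rw [Finset.mem_Icc] at hi
      rw [show CarlitzAux.wN r (r / p) n i = r by
          rw [CarlitzAux.wN]; rw [if_neg (by omega), if_neg (by omega)],
        show CarlitzAux.vN r (r / p) n i = i * r by
          rw [CarlitzAux.vN]; rw [if_neg (by omega), if_neg (by omega)]]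
    rw [h0, hgn, Finset.prod_congr rfl hmid]
    ring
  have hG : (∏ i ∈ Finset.range (n + 1),
        ((1 : MvPowerSeries (Fin 2) ℂ)
          - X 1 ^ CarlitzAux.wN r (r / p) n i * X 0 ^ CarlitzAux.vN r (r / p) n i))
      * CarlitzAux.Gser r (r / p) n = 1 := by
    rw [CarlitzAux.Gser, ← Finset.prod_mul_distrib]
    apply Finset.prod_eq_one
    intro i _
    exact CarlitzAux.one_sub_mul_geom _ _ (CarlitzAux.wN_pos hr hd n i)
  rw [CarlitzAux.carlitz_eq hr hd hdr hn, hA]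
  trans ((∑ γ ∈ CarlitzAux.GammaD r (r / p) n hn,
      monomial (CarlitzAux.e2 (fmaj γ) (fdes γ hn)) 1) *
    ((((1 : MvPowerSeries (Fin 2) ℂ) - X 1) *
      (∏ i ∈ Finset.Icc 1 (n - 1), (1 - X 1 ^ r * X 0 ^ (i * r))) *
      (1 - X 1 ^ (r / p) * X 0 ^ (n * (r / p)))) * CarlitzAux.Gser r (r / p) n))
  · ring
  · rw [hD, hG, mul_one]
end

section
/- Let g ∈ G_0(r,n) (i.e., the last color c_n = 0) and 0 ≤ i < r. Define g^i by adding i mod r to every color of g. Then fdes(g^i) = fdes(g) + i and fmaj(g^i) = fmaj(g) + n·i. -/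
open Finset

namespace ColoredPerm

/-- `g^i`: add `i` (mod `r`) to every color of `g`. -/
def shiftg {r n : ℕ} (hr : 0 < r) (g : CPerm r n) (i : ℕ) : CPerm r n :=
  (fun j => ⟨((g.1 j : ℕ) + i) % r, Nat.mod_lt _ hr⟩, g.2)

end ColoredPerm

/-!
Write `c_k + i = c'_k + r·w_k` with a carry `w_k ∈ {0, 1}`. At each pair of neighbouring
positions the descent indicator of `g^i` exceeds that of `g` by exactly `w_j - w_{j+1}`, so the
differences telescope: `des(g^i) = des(g) + w_1` and `maj(g^i) = maj(g) + Σ w_k`, because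
`w_n = 0` when `c_n = 0`. Summing the carry relation, `col(g^i) = col(g) + n·i - r·Σ w_k`, so the
carries cancel in `fmaj`, while `c'_1 + r·w_1 = c_1 + i` gives `fdes`.
-/

theorem sum_range_add_of_telescope {m : ℕ} (d d' f : ℕ → ℕ)
    (h : ∀ j < m, d' j + f (j + 1) = d j + f j) :
    ∑ j ∈ range m, d' j + f m = ∑ j ∈ range m, d j + f 0 := by
  induction m with
  | zero => simp
  | succ m ih =>
    have := h m m.lt_succ_self
    have := ih fun j hj => h j (by omega)
    rw [sum_range_succ, sum_range_succ]
    omega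

theorem sum_range_mul_add_of_telescope {m : ℕ} (d d' f : ℕ → ℕ)
    (h : ∀ j < m, d' j + f (j + 1) = d j + f j) :
    ∑ j ∈ range m, (j + 1) * d' j + m * f m =
      ∑ j ∈ range m, (j + 1) * d j + ∑ j ∈ range m, f j := by
  induction m with
  | zero => simp
  | succ m ih =>
    have hm := congrArg ((m + 1) * ·) (h m m.lt_succ_self)
    have := ih fun j hj => h j (by omega)
    simp only [sum_range_succ] at *
    linarith

theorem carry_le_one {r a i : ℕ} (ha : a < r) (hi : i < r) : (a + i) / r ≤ 1 :=
  Nat.le_of_lt_succ <| Nat.div_lt_of_lt_mul (by omega)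

theorem descent_indicator_shift_add_carry {r a b i : ℕ} (ha : a < r) (hb : b < r) (hi : i < r)
    (P : Prop) [Decidable P] :
    (if (a + i) % r < (b + i) % r ∨ ((a + i) % r = (b + i) % r ∧ P) then 1 else 0)
        + (b + i) / r =
      (if a < b ∨ (a = b ∧ P) then 1 else 0) + (a + i) / r := by
  have hsa := Nat.mod_add_div (a + i) r
  have hsb := Nat.mod_add_div (b + i) r
  have hca := carry_le_one ha hi
  have hcb := carry_le_one hb hi
  have hma := Nat.mod_lt (a + i) (by omega : 0 < r)
  have hmb := Nat.mod_lt (b + i) (by omega : 0 < r)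
  generalize (a + i) % r = a' at *
  generalize (b + i) % r = b' at *
  generalize (a + i) / r = ca at *
  generalize (b + i) / r = cb at *
  interval_cases ca <;> interval_cases cb <;>
    by_cases hP : P <;> simp only [hP, and_true, and_false, or_false] <;> split_ifs <;> omega

namespace ColoredPerm

variable {r n : ℕ}

theorem isDesc_iff_val (g : CPerm r n) {j : ℕ} (hj : j + 1 < n) :
    isDesc g j ↔ (g.1 ⟨j, by omega⟩ : ℕ) < g.1 ⟨j + 1, hj⟩ ∨
      ((g.1 ⟨j, by omega⟩ : ℕ) = g.1 ⟨j + 1, hj⟩ ∧ g.2 ⟨j + 1, hj⟩ < g.2 ⟨j, by omega⟩) := by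
  rw [isDesc, exists_prop_of_true hj, Fin.ext_iff]
  rfl

theorem Des_eq_filter_range_pred (g : CPerm r n) : Des g = (range (n - 1)).filter (isDesc g) := by
  ext j
  simp only [Des, mem_filter, mem_range]
  exact ⟨fun ⟨_, hj⟩ => ⟨by obtain ⟨_, _⟩ := hj; omega, hj⟩, fun ⟨_, hj⟩ => ⟨by omega, hj⟩⟩

theorem des_eq_sum (g : CPerm r n) :
    des g = ∑ j ∈ range (n - 1), if isDesc g j then 1 else 0 := by
  rw [des, Des_eq_filter_range_pred, card_filter]

theorem maj_eq_sum (g : CPerm r n) :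
    maj g = ∑ j ∈ range (n - 1), (j + 1) * if isDesc g j then 1 else 0 := by
  simp only [maj, Des_eq_filter_range_pred, sum_filter, mul_boole]

def carry (g : CPerm r n) (i k : ℕ) : ℕ := if h : k < n then ((g.1 ⟨k, h⟩ : ℕ) + i) / r else 0

theorem carry_of_lt (g : CPerm r n) (i : ℕ) {k : ℕ} (hk : k < n) :
    carry g i k = ((g.1 ⟨k, hk⟩ : ℕ) + i) / r :=
  dif_pos hk

theorem shiftg_color_add_carry (hr : 0 < r) (g : CPerm r n) (i : ℕ) (k : Fin n) :
    ((shiftg hr g i).1 k : ℕ) + r * carry g i k = g.1 k + i := by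
  rw [carry_of_lt g i k.isLt]
  exact Nat.mod_add_div _ _

theorem isDesc_shiftg_add_carry (hr : 0 < r) (g : CPerm r n) {i : ℕ} (hi : i < r) {j : ℕ}
    (hj : j + 1 < n) :
    (if isDesc (shiftg hr g i) j then 1 else 0) + carry g i (j + 1) =
      (if isDesc g j then 1 else 0) + carry g i j := by
  rw [carry_of_lt g i hj, carry_of_lt g i (by omega)]
  convert descent_indicator_shift_add_carry (g.1 ⟨j, by omega⟩).isLt (g.1 ⟨j + 1, hj⟩).isLt hi
    (g.2 ⟨j + 1, hj⟩ < g.2 ⟨j, by omega⟩) using 3 <;> exact isDesc_iff_val _ hj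

theorem col_shiftg_add_carry (hr : 0 < r) (g : CPerm r n) (i : ℕ) :
    col (shiftg hr g i) + r * ∑ k ∈ range n, carry g i k = col g + n * i := by
  rw [← Fin.sum_univ_eq_sum_range (carry g i), mul_sum, col, col, ← sum_add_distrib]
  calc ∑ k, (((shiftg hr g i).1 k : ℕ) + r * carry g i k)
      = ∑ k, ((g.1 k : ℕ) + i) := sum_congr rfl fun k _ => shiftg_color_add_carry hr g i k
    _ = col g + n * i := by simp [sum_add_distrib, col]

end ColoredPerm

open ColoredPerm in
/-- For `g ∈ G_0` (last color `0`) and `0 ≤ i < r`: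
`fdes(g^i) = fdes(g) + i` and `fmaj(g^i) = fmaj(g) + n·i`. -/
theorem shift_fdes_fmaj (r n : ℕ) (hr : 0 < r) (hn : 0 < n) (g : CPerm r n)
    (hg : (g.1 ⟨n - 1, Nat.sub_lt hn one_pos⟩ : ℕ) = 0) (i : ℕ) (hi : i < r) :
    fdes (shiftg hr g i) hn = fdes g hn + i ∧
      fmaj (shiftg hr g i) = fmaj g + n * i := by
  obtain ⟨m, rfl⟩ : ∃ m, n = m + 1 := ⟨n - 1, by omega⟩
  have hstep (j : ℕ) (hj : j < m) := isDesc_shiftg_add_carry hr g hi (j := j) (by omega)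
  have hlast : carry g i m = 0 := by
    rw [carry_of_lt g i m.lt_succ_self, show (g.1 ⟨m, _⟩ : ℕ) = 0 from hg]
    exact Nat.div_eq_of_lt (by omega)
  have hdes : des (shiftg hr g i) = des g + carry g i 0 := by
    have := sum_range_add_of_telescope _ _ _ hstep
    rw [des_eq_sum, des_eq_sum]
    simp only [Nat.add_sub_cancel]
    omega
  have hmaj : maj (shiftg hr g i) = maj g + ∑ j ∈ range m, carry g i j := by
    have := sum_range_mul_add_of_telescope _ _ _ hstep
    rw [maj_eq_sum, maj_eq_sum]
    simp only [Nat.add_sub_cancel]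
    rw [hlast, mul_zero, add_zero] at this
    omega
  have hcol := col_shiftg_add_carry hr g i
  rw [sum_range_succ, hlast, add_zero] at hcol
  have hc0 : _ + r * carry g i 0 = _ := shiftg_color_add_carry hr g i ⟨0, hn⟩
  constructor
  · rw [fdes, fdes, hdes, mul_add]
    omega
  · rw [fmaj, fmaj, hmaj, mul_add]
    omega
end
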